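/- arXiv:2509.02375 — 8 statements merged into one kernel-verified Lean document; each statement's English description precedes it below -/
import Mathlib

section
/- Let n ≥ 2 and let N be an n×n matrix over ℤ all of whose entries lie in {0,1} and which satisfies N² = 0 (so N is the adjacency matrix of a bipartite quiver without loops or parallel arrows). Set C = I − N, let φ(X) = det(X•C + Cᵀ) ∈ ℤ[X], and write a₁ = φ.coeff(n−1), a₂ = φ.coeff(n−2). Let e = Σ_{i,j} N_{ij} be the number of arrows, d_i = Σ_j N_{ij} + Σ_j N_{ji} the degree of vertex i, and q = Σ_{i<j} C((N·Nᵀ)_{ij}, 2) (the number of full subquivers of type Ã_{2,2}). Then a₁ = n − e and 2·a₂ = (n−e)(n−1−e) + 2e − 4q − Σ_{i=1}^{n} d_i(d_i − 1). -/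
/-!
Since `N² = 0`, `C = 1 - N` has inverse `1 + N`, so `X • C + Cᵀ = C (X + A)` with
`A = (1 + N)(1 - Nᵀ)`, and `det C = 1`: the Coxeter polynomial is the characteristic polynomial
of `-A`. Its coefficients of degree `n - 1` and `n - 2` are `tr A` and `(tr² A - tr A²) / 2`, the
latter being the sum of the `2 × 2` principal minors. Expanding `A` with `N² = 0` gives
`tr A = n - tr (N Nᵀ)` and `tr A² = n - 4 tr (N Nᵀ) + tr ((N Nᵀ)²)`. For a 0-1 matrix
`tr (N Nᵀ)` is the number of arrows, and `tr ((N Nᵀ)²) = ∑ᵢⱼ (N Nᵀ)ᵢⱼ²`: an off-diagonal entry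
`(N Nᵀ)ᵢⱼ` counts the common targets of `i` and `j`, which yields the `Ã₂,₂` term, while the
diagonal entries (out-degrees) and `∑ᵢⱼ (N Nᵀ)ᵢⱼ = ∑ₖ (in-degree of k)²` yield the degree term.
-/

open Polynomial Matrix Finset

theorem two_nsmul_sum_sum_ite_lt {ι M : Type*} [Fintype ι] [LinearOrder ι] [AddCommGroup M]
    (g : ι → ι → M) (hg : ∀ i j, g i j = g j i) :
    2 • ∑ i, ∑ j, (if i < j then g i j else 0) = ∑ i, ∑ j, g i j - ∑ i, g i i := by
  have hsplit : ∀ i j, g i j = (if i < j then g i j else 0) + (if j < i then g j i else 0) +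
      (if i = j then g i j else 0) := by
    intro i j
    rcases lt_trichotomy i j with h | rfl | h
    · simp [h, h.not_gt, h.ne]
    · simp
    · simp [h, h.not_gt, h.ne', hg i j]
  simp_rw [eq_sub_iff_add_eq, two_nsmul]
  conv_rhs => rw [sum_congr rfl fun i _ => sum_congr rfl fun j _ => hsplit i j]
  simp only [sum_add_distrib, sum_ite_eq, mem_univ, if_true]
  rw [sum_comm (f := fun i j => if j < i then g j i else 0)]

theorem Int.two_mul_toNat_choose_two {k : ℤ} (hk : 0 ≤ k) :
    2 * (k.toNat.choose 2 : ℤ) = k * (k - 1) := by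
  have h := Nat.cast_choose_two ℚ k.toNat
  rw [show ((k.toNat : ℕ) : ℚ) = k by exact_mod_cast Int.toNat_of_nonneg hk] at h
  exact_mod_cast (by rw [h]; ring : (2 : ℚ) * (k.toNat.choose 2 : ℕ) = k * (k - 1))

theorem Finset.sum_powersetCard_two_sum_offDiag {n M : Type*} [Fintype n] [DecidableEq n]
    [AddCommMonoid M] (f : n × n → M) :
    ∑ s ∈ univ.powersetCard 2, ∑ x ∈ s.offDiag, f x = ∑ x ∈ univ.offDiag, f x := by
  have hfiber : ∀ s ∈ univ.powersetCard 2,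
      {x ∈ (univ : Finset n).offDiag | {x.1, x.2} = s} = s.offDiag := by
    intro s hs
    ext x
    simp only [mem_filter, mem_offDiag, mem_univ, true_and]
    constructor
    · rintro ⟨hx, rfl⟩
      simp [hx]
    · rintro ⟨h1, h2, hx⟩
      refine ⟨hx, eq_of_subset_of_card_le (by simp [insert_subset_iff, h1, h2]) ?_⟩
      rw [mem_powersetCard_univ.1 hs, card_pair hx]
  rw [← sum_fiberwise_of_maps_to (g := fun x : n × n => ({x.1, x.2} : Finset n))
    (t := univ.powersetCard 2) fun x hx =>
      mem_powersetCard_univ.2 (card_pair (mem_offDiag.1 hx).2.2)]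
  exact sum_congr rfl fun s hs => by rw [hfiber s hs]

namespace Matrix

section Trace

variable {n R : Type*} [Fintype n] [CommRing R]

theorem trace_mul_self_of_isSymm {P : Matrix n n R} (hP : P.IsSymm) :
    (P * P).trace = ∑ i, ∑ j, P i j ^ 2 := by
  simp only [trace, diag, mul_apply, sq]
  exact sum_congr rfl fun i _ => sum_congr rfl fun j _ => by rw [hP.apply i j]

theorem mul_transpose_apply_self_of_zero_one {N : Matrix n n R}
    (h01 : ∀ i j, N i j = 0 ∨ N i j = 1) (i : n) : (N * Nᵀ) i i = ∑ j, N i j := by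
  refine sum_congr rfl fun j _ => ?_
  rcases h01 i j with h | h <;> simp [h]

theorem sum_sum_mul_transpose_apply (N : Matrix n n R) :
    ∑ i, ∑ j, (N * Nᵀ) i j = ∑ k, (∑ i, N i k) ^ 2 := by
  simp only [mul_apply, transpose_apply, sq, sum_mul_sum]
  exact (sum_congr rfl fun i _ => sum_comm).trans sum_comm

theorem sum_row_sum_mul_col_sum_of_mul_self_eq_zero {N : Matrix n n R} (hN : N * N = 0) :
    ∑ i, (∑ j, N i j) * (∑ j, N j i) = 0 := by
  calc ∑ i, (∑ j, N i j) * (∑ j, N j i) = ∑ k, ∑ j, (N * N) k j := by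
        simp only [mul_apply, sum_mul_sum]
        refine (sum_congr rfl fun i _ => sum_comm).trans (sum_comm.trans ?_)
        exact sum_congr rfl fun k _ => sum_comm.trans
          (sum_congr rfl fun j _ => sum_congr rfl fun i _ => mul_comm _ _)
    _ = 0 := by simp [hN]

end Trace

section Charpoly

variable {n R : Type*} [DecidableEq n] [CommRing R]

theorem two_mul_det_submatrix_of_card_eq_two (M : Matrix n n R) {s : Finset n} (hs : #s = 2) :
    2 * (M.submatrix ((↑) : s → n) (↑)).det =
      ∑ x ∈ s.offDiag, (M x.1 x.1 * M x.2 x.2 - M x.1 x.2 * M x.2 x.1) := by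
  obtain ⟨a, b, hab, rfl⟩ := card_eq_two.1 hs
  have hoff : ({a, b} : Finset n).offDiag = {(a, b), (b, a)} := by
    ext ⟨x, y⟩
    simp only [mem_offDiag, mem_insert, mem_singleton, Prod.mk.injEq]
    grind
  let e : Fin 2 ≃ ({a, b} : Finset n) :=
    Equiv.ofBijective ![⟨a, by simp⟩, ⟨b, by simp⟩] <|
      (Fintype.bijective_iff_injective_and_card _).2
        ⟨by intro i j; fin_cases i <;> fin_cases j <;> simp [hab, hab.symm],
          by rw [Fintype.card_fin, Fintype.card_coe, hs]⟩
  rw [← det_submatrix_equiv_self e, det_fin_two, hoff, sum_pair (by simp [hab])]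
  simp only [e, Equiv.coe_ofBijective, submatrix_apply, cons_val_zero, cons_val_one]
  ring

variable [Fintype n]

theorem two_mul_charpoly_coeff_card_sub_two (M : Matrix n n R) (hn : 2 ≤ Fintype.card n) :
    2 * M.charpoly.coeff (Fintype.card n - 2) = M.trace ^ 2 - (M * M).trace := by
  rw [charpoly_coeff_eq_sum_minors M 2 hn, neg_one_sq, one_mul, mul_sum,
    sum_congr rfl fun s hs => two_mul_det_submatrix_of_card_eq_two M (mem_powersetCard_univ.1 hs),
    sum_powersetCard_two_sum_offDiag]
  have hoffDiag : ∑ x ∈ univ.offDiag, (M x.1 x.1 * M x.2 x.2 - M x.1 x.2 * M x.2 x.1) =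
      ∑ x ∈ univ ×ˢ univ, (M x.1 x.1 * M x.2 x.2 - M x.1 x.2 * M x.2 x.1) := by
    refine sum_subset (fun x _ => by simp) fun x _ hx => ?_
    obtain ⟨i, j⟩ := x
    obtain rfl : i = j := by simpa using hx
    ring
  rw [hoffDiag, sum_product]
  simp [trace, sq, sum_mul_sum, mul_apply]

theorem det_X_smul_add_mul_map (B A : Matrix n n R) :
    ((X : R[X]) • B.map C + (B * A).map C).det = C B.det * (-A).charpoly := by
  have hfac : (X : R[X]) • B.map C + (B * A).map C = B.map C * charmatrix (-A) := by
    rw [charmatrix, map_neg, sub_neg_eq_add, Matrix.mul_add, Matrix.map_mul]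
    congr 1
    rw [scalar_apply, ← smul_one_eq_diagonal, Matrix.mul_smul, Matrix.mul_one]
  rw [hfac, det_mul, RingHom.map_det]
  rfl

theorem det_one_sub_of_isNilpotent [IsReduced R] {N : Matrix n n R} (hN : IsNilpotent N) :
    (1 - N).det = 1 := by
  have h := ((isNilpotent_charpoly_sub_pow_of_isNilpotent hN).map (evalRingHom 1)).eq_zero
  rwa [map_sub, coe_evalRingHom, eval_charpoly, map_one, eval_pow, eval_X, one_pow,
    sub_eq_zero] at h

end Charpoly

section SquareZero

variable {n R : Type*} [Fintype n] [DecidableEq n] [CommRing R]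

theorem transpose_one_sub_of_mul_self_eq_zero {N : Matrix n n R} (hN : N * N = 0) :
    (1 - N)ᵀ = (1 - N) * ((1 + N) * (1 - Nᵀ)) := by
  have hinv : (1 - N) * (1 + N) = 1 := by
    rw [show (1 - N) * (1 + N) = 1 - N * N by noncomm_ring, hN, sub_zero]
  rw [← Matrix.mul_assoc, hinv, Matrix.one_mul, transpose_sub, transpose_one]

theorem trace_one_add_mul_one_sub_transpose (N : Matrix n n R) :
    ((1 + N) * (1 - Nᵀ)).trace = Fintype.card n - (N * Nᵀ).trace := by
  rw [show (1 + N) * (1 - Nᵀ) = 1 + (N - Nᵀ) - N * Nᵀ by noncomm_ring]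
  simp [trace_sub, trace_add]

theorem trace_sq_one_add_mul_one_sub_transpose {N : Matrix n n R} (hN : N * N = 0) :
    ((1 + N) * (1 - Nᵀ) * ((1 + N) * (1 - Nᵀ))).trace =
      Fintype.card n - 4 * (N * Nᵀ).trace + (N * Nᵀ * (N * Nᵀ)).trace := by
  have hNt : Nᵀ * Nᵀ = 0 := by rw [← transpose_mul, hN, transpose_zero]
  have h1 : N * (N * Nᵀ) = 0 := by rw [← Matrix.mul_assoc, hN, Matrix.zero_mul]
  have h2 : N * Nᵀ * Nᵀ = 0 := by rw [Matrix.mul_assoc, hNt, Matrix.mul_zero]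
  have h3 : (N * Nᵀ * N).trace = 0 := by rw [trace_mul_comm, h1, trace_zero]
  have h4 : (Nᵀ * (N * Nᵀ)).trace = 0 := by rw [trace_mul_comm, h2, trace_zero]
  have h5 : (Nᵀ * N).trace = (N * Nᵀ).trace := trace_mul_comm _ _
  have hexp : (1 + N) * (1 - Nᵀ) * ((1 + N) * (1 - Nᵀ)) =
      1 + 2 • (N - Nᵀ - N * Nᵀ) + (N * N - N * Nᵀ - N * (N * Nᵀ) - Nᵀ * N + Nᵀ * Nᵀ
        + Nᵀ * (N * Nᵀ) - N * Nᵀ * N + N * Nᵀ * Nᵀ + N * Nᵀ * (N * Nᵀ)) := by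
    noncomm_ring
  rw [hexp, hN, hNt, h1, h2]
  simp only [trace_add, trace_sub, trace_smul, trace_one, trace_transpose, trace_zero, h3, h4, h5]
  ring

end SquareZero

theorem trace_mul_transpose_sq_of_zero_one {ι : Type*} [Fintype ι] [LinearOrder ι]
    {N : Matrix ι ι ℤ} (h01 : ∀ i j, N i j = 0 ∨ N i j = 1) (hN : N * N = 0) :
    (N * Nᵀ * (N * Nᵀ)).trace =
      4 * ∑ i, ∑ j, (if i < j then (((N * Nᵀ) i j).toNat.choose 2 : ℤ) else 0)
        + ∑ i, ((∑ j, N i j) + ∑ j, N j i) * ((∑ j, N i j) + ∑ j, N j i - 1)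
        + ∑ i, ∑ j, N i j := by
  set P := N * Nᵀ
  have hP : P.IsSymm := isSymm_mul_transpose_self N
  have hN0 : ∀ i j, 0 ≤ N i j := fun i j => by rcases h01 i j with h | h <;> simp [h]
  have hP0 : ∀ i j, 0 ≤ P i j := fun i j =>
    sum_nonneg fun k _ => mul_nonneg (hN0 i k) (hN0 j k)
  have hq : 4 * ∑ i, ∑ j, (if i < j then ((P i j).toNat.choose 2 : ℤ) else 0) =
      ∑ i, ∑ j, P i j * (P i j - 1) - ∑ i, P i i * (P i i - 1) := by
    have h2 := two_nsmul_sum_sum_ite_lt (fun i j => ((P i j).toNat.choose 2 : ℤ)) fun i j => by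
      rw [hP.apply j i]
    rw [nsmul_eq_mul, Nat.cast_ofNat] at h2
    rw [show (4 : ℤ) = 2 * 2 by norm_num, mul_assoc, h2, mul_sub, mul_sum, mul_sum]
    simp only [mul_sum, Int.two_mul_toNat_choose_two (hP0 _ _)]
  have hsq : ∑ i, ∑ j, P i j ^ 2 = ∑ i, ∑ j, P i j * (P i j - 1) + ∑ i, ∑ j, P i j := by
    simp only [← sum_add_distrib]
    exact sum_congr rfl fun i _ => sum_congr rfl fun j _ => by ring
  have hdeg : ∑ i, ((∑ j, N i j) + ∑ j, N j i) * ((∑ j, N i j) + ∑ j, N j i - 1) =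
      ∑ i, P i i * (P i i - 1) + ∑ i, (∑ j, N j i) ^ 2 - ∑ i, ∑ j, N j i
        + 2 * ∑ i, (∑ j, N i j) * (∑ j, N j i) := by
    rw [mul_sum, ← sum_add_distrib, ← sum_sub_distrib, ← sum_add_distrib]
    have hdiag : ∀ i, P i i = ∑ j, N i j := mul_transpose_apply_self_of_zero_one h01
    exact sum_congr rfl fun i _ => by rw [hdiag]; ring
  rw [trace_mul_self_of_isSymm hP, hsq, hq, hdeg, sum_sum_mul_transpose_apply,
    sum_row_sum_mul_col_sum_of_mul_self_eq_zero hN, sum_comm (f := fun i j => N j i)]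
  ring

end Matrix

/-- Theorem 1.1 (first part) of the paper: coefficients `a₁, a₂` of the Coxeter
polynomial of a bipartite quiver without parallel arrows, encoded by its
adjacency matrix `N` (a 0-1 matrix with `N² = 0`). -/
theorem coxeter_coeffs_bipartite_quiver (n : ℕ) (hn : 2 ≤ n)
    (N : Matrix (Fin n) (Fin n) ℤ)
    (h01 : ∀ i j, N i j = 0 ∨ N i j = 1) (hN2 : N * N = 0) :
    let C : Matrix (Fin n) (Fin n) ℤ := 1 - N
    let φ : ℤ[X] := ((X : ℤ[X]) • C.map Polynomial.C + Cᵀ.map Polynomial.C).det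
    let e : ℤ := ∑ i, ∑ j, N i j
    let d : Fin n → ℤ := fun i => (∑ j, N i j) + (∑ j, N j i)
    let q : ℤ := ∑ i, ∑ j, if i < j then (((N * Nᵀ) i j).toNat.choose 2 : ℤ) else 0
    φ.coeff (n - 1) = n - e ∧
      2 * φ.coeff (n - 2) =
        (n - e) * (n - 1 - e) + 2 * e - 4 * q - ∑ i, d i * (d i - 1) := by
  intro C φ e d q
  set A := (1 + N) * (1 - Nᵀ)
  have hφ : φ = (-A).charpoly := by
    have hdet : C.det = 1 := det_one_sub_of_isNilpotent ⟨2, by rw [sq, hN2]⟩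
    simp only [φ]
    rw [show Cᵀ = C * A from transpose_one_sub_of_mul_self_eq_zero hN2, det_X_smul_add_mul_map,
      hdet, Polynomial.C_1, one_mul]
  have htrP : (N * Nᵀ).trace = e :=
    sum_congr rfl fun i _ => mul_transpose_apply_self_of_zero_one h01 i
  have htrA : A.trace = n - e := by
    rw [trace_one_add_mul_one_sub_transpose, htrP, Fintype.card_fin]
  constructor
  · have : Nonempty (Fin n) := Fin.pos_iff_nonempty.1 (by omega)
    have h1 := trace_eq_neg_charpoly_coeff (-A)
    rw [trace_neg, htrA, Fintype.card_fin, ← hφ] at h1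
    linarith
  · have h2 := two_mul_charpoly_coeff_card_sub_two (-A) (by rwa [Fintype.card_fin])
    have htrPP : (N * Nᵀ * (N * Nᵀ)).trace = 4 * q + ∑ i, d i * (d i - 1) + e :=
      trace_mul_transpose_sq_of_zero_one h01 hN2
    rw [← hφ, trace_neg, neg_mul_neg, trace_sq_one_add_mul_one_sub_transpose hN2, htrPP, htrA,
      htrP, Fintype.card_fin] at h2
    rw [h2]
    ring
end

section
/- Let n ≥ 2 and let N be an n×n matrix over ℤ with entries in {0,1} and N² = 0. Set C = I − N, φ(X) = det(X•C + Cᵀ), a₂ = φ.coeff(n−2), e = Σ_{i,j} N_{ij}, d_i = Σ_j N_{ij} + Σ_j N_{ji}, q = Σ_{i<j} C((N·Nᵀ)_{ij}, 2), and let v = |{i : d_i = 0}| be the number of isolated vertices. Then 2·a₂ = (n−e)(n+1−e) − 2v − 4q − Σ_{i : d_i > 0} (d_i−1)(d_i−2). -/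
/-!
Since `N² = 0`, the matrix `C = 1 - N` has inverse `1 + N` and determinant `1`, so
`φ = det (X • C + Cᵀ)` is the characteristic polynomial of `-A` with `A = (1 + N) (1 - Nᵀ)`.
Its coefficient of `X ^ (n - 2)` is the sum of the `2 × 2` principal minors, whence
`2 a₂ = (tr A)² - tr (A²)`. Expanding with `N² = 0` gives `tr A = n - e` and
`tr (A²) = n - 4 e + tr (P²)` for `P = N Nᵀ`, whose entry `P i j` counts the common
successors of `i` and `j`. Writing `P i j ^ 2 = P i j + 2 C(P i j, 2)`, the diagonal of `P`
contributes the squared out-degrees, the off-diagonal binomials give `4 q`, and the sum of all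
entries of `P` is the sum of the squared in-degrees. As every vertex is a sink or a source,
`d i ^ 2` is the sum of its squared in- and out-degree.
-/

open Polynomial Matrix Finset

theorem Matrix.two_mul_det_of_card_eq_two {ι R : Type*} [Fintype ι] [DecidableEq ι] [CommRing R]
    (h : Fintype.card ι = 2) (A : Matrix ι ι R) :
    2 * A.det = ∑ i, ∑ j, (A i i * A j j - A i j * A j i) := by
  let e : Fin 2 ≃ ι := (Fintype.equivFinOfCardEq h).symm
  rw [← det_submatrix_equiv_self e, det_fin_two]
  simp only [← e.sum_comp, Fin.sum_univ_two, submatrix_apply]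
  ring

theorem Finset.sum_sum_eq_sum_powersetCard_two {α M : Type*} [DecidableEq α] [AddCommMonoid M]
    (s : Finset α) (f : α → α → M) (hf : ∀ i, f i i = 0) :
    ∑ i ∈ s, ∑ j ∈ s, f i j = ∑ t ∈ s.powersetCard 2, ∑ i ∈ t, ∑ j ∈ t, f i j := by
  have hoffDiag : ∀ t : Finset α, ∑ i ∈ t, ∑ j ∈ t, f i j = ∑ p ∈ t.offDiag, f p.1 p.2 := by
    intro t
    rw [← sum_product' t t, ← diag_union_offDiag, sum_union (disjoint_diag_offDiag t),
      sum_diag, sum_eq_zero fun i _ => hf i, zero_add]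
  have hmaps : ∀ p ∈ s.offDiag, ({p.1, p.2} : Finset α) ∈ s.powersetCard 2 := by
    intro p hp
    obtain ⟨h1, h2, h12⟩ := mem_offDiag.mp hp
    exact mem_powersetCard.mpr ⟨insert_subset h1 (singleton_subset_iff.mpr h2), card_pair h12⟩
  rw [hoffDiag, ← sum_fiberwise_of_maps_to hmaps]
  refine sum_congr rfl fun t ht => ?_
  rw [hoffDiag]
  obtain ⟨hts, htcard⟩ := mem_powersetCard.mp ht
  congr 1
  ext ⟨a, b⟩
  simp only [mem_filter, mem_offDiag]
  constructor
  · rintro ⟨⟨-, -, hab⟩, rfl⟩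
    simp [hab]
  · rintro ⟨ha, hb, hab⟩
    have hsub : ({a, b} : Finset α) ⊆ t := insert_subset ha (singleton_subset_iff.mpr hb)
    exact ⟨⟨hts ha, hts hb, hab⟩, eq_of_subset_of_card_le hsub (by rw [htcard, card_pair hab])⟩

theorem Matrix.two_mul_coeff_charpoly_card_sub_two {n R : Type*} [Fintype n] [DecidableEq n]
    [CommRing R] (hn : 2 ≤ Fintype.card n) (M : Matrix n n R) :
    2 * M.charpoly.coeff (Fintype.card n - 2) = M.trace ^ 2 - (M * M).trace := by
  have hsq : M.trace ^ 2 - (M * M).trace = ∑ i, ∑ j, (M i i * M j j - M i j * M j i) := by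
    simp only [trace, diag, mul_apply, sq, sum_mul_sum, ← sum_sub_distrib]
  rw [charpoly_coeff_eq_sum_minors M 2 hn, hsq,
    sum_sum_eq_sum_powersetCard_two _ _ fun i => sub_self _, neg_one_sq, one_mul, mul_sum]
  refine sum_congr rfl fun t ht => ?_
  rw [two_mul_det_of_card_eq_two (by simpa using (mem_powersetCard.mp ht).2)]
  simp only [submatrix_apply]
  rw [← sum_coe_sort t]
  exact sum_congr rfl fun i _ => sum_coe_sort t fun j => M i i * M j j - M i j * M j i

theorem Matrix.det_one_sub_of_isNilpotent_s1 {n R : Type*} [Fintype n] [DecidableEq n] [CommRing R]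
    [IsReduced R] {N : Matrix n n R} (hN : IsNilpotent N) : (1 - N).det = 1 := by
  have hchar : N.charpoly = X ^ Fintype.card n := by
    rw [← sub_eq_zero]
    ext i
    exact (Polynomial.isNilpotent_iff.mp (isNilpotent_charpoly_sub_pow_of_isNilpotent hN) i).eq_zero
  simpa [hchar] using (eval_charpoly N 1).symm

theorem Matrix.det_X_smul_add_transpose {n R : Type*} [Fintype n] [DecidableEq n] [CommRing R]
    {A B : Matrix n n R} (hBA : B * A = 1) :
    ((X : R[X]) • A.map C + Aᵀ.map C).det = C A.det * (-(B * Aᵀ)).charpoly := by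
  have hAB : A * B = 1 := mul_eq_one_comm.mp hBA
  have hfactor : (X : R[X]) • A.map C + Aᵀ.map C = A.map C * charmatrix (-(B * Aᵀ)) := by
    rw [charmatrix, RingHom.mapMatrix_apply, Matrix.map_neg _ (map_neg _), sub_neg_eq_add,
      mul_add, Matrix.map_mul, ← mul_assoc, ← Matrix.map_mul, hAB, Matrix.map_one _ (map_zero _)
      (map_one _), one_mul, scalar_apply, smul_eq_mul_diagonal]
  rw [hfactor, det_mul, charpoly, RingHom.map_det]
  rfl

theorem Matrix.trace_one_add_mul_one_sub_transpose_s1 {n R : Type*} [Fintype n] [DecidableEq n]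
    [CommRing R] (N : Matrix n n R) :
    ((1 + N) * (1 - Nᵀ)).trace = Fintype.card n - (N * Nᵀ).trace := by
  simp only [add_mul, mul_sub, one_mul, mul_one, trace_add, trace_sub, trace_one, trace_transpose]
  ring

theorem Matrix.trace_sq_one_add_mul_one_sub_transpose_s1 {n R : Type*} [Fintype n] [DecidableEq n]
    [CommRing R] {N : Matrix n n R} (hN2 : N * N = 0) :
    ((1 + N) * (1 - Nᵀ) * ((1 + N) * (1 - Nᵀ))).trace
      = Fintype.card n - 4 * (N * Nᵀ).trace + (N * Nᵀ * (N * Nᵀ)).trace := by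
  have hNT2 : Nᵀ * Nᵀ = 0 := by rw [← transpose_mul, hN2, transpose_zero]
  have htr_N_NT_N : (N * Nᵀ * N).trace = 0 := by
    rw [trace_mul_comm, ← mul_assoc, hN2, zero_mul, trace_zero]
  have htr_N_NT_NT : (N * Nᵀ * Nᵀ).trace = 0 := by rw [mul_assoc, hNT2, mul_zero, trace_zero]
  have htr_NT_N_NT : (Nᵀ * N * Nᵀ).trace = 0 := by
    rw [trace_mul_comm, ← mul_assoc, hNT2, zero_mul, trace_zero]
  simp only [add_mul, mul_add, mul_sub, sub_mul, one_mul, mul_one, ← mul_assoc, trace_add,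
    trace_sub, trace_one, trace_transpose, hN2, hNT2, zero_mul, trace_zero, htr_N_NT_N,
    htr_N_NT_NT, htr_NT_N_NT, trace_mul_comm Nᵀ N]
  ring

theorem Finset.sum_sum_eq_sum_diag_add_two_nsmul_sum_sum_lt {ι M : Type*} [Fintype ι]
    [LinearOrder ι] [AddCommMonoid M] (f : ι → ι → M) (hf : ∀ i j, f i j = f j i) :
    ∑ i, ∑ j, f i j = ∑ i, f i i + 2 • ∑ i, ∑ j, if i < j then f i j else 0 := by
  have hsplit : ∀ i j, f i j = ((if i < j then f i j else 0) + if j < i then f j i else 0)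
      + if i = j then f i j else 0 := by
    intro i j
    rcases lt_trichotomy i j with h | rfl | h
    · simp [h, h.ne, h.not_gt]
    · simp
    · simp [h, h.ne', h.not_gt, hf i j]
  simp only [sum_congr rfl fun i _ => sum_congr rfl fun j _ => hsplit i j, sum_add_distrib,
    sum_ite_eq, mem_univ, if_true, two_nsmul]
  rw [sum_comm (f := fun i j => if j < i then f j i else 0)]
  abel

theorem Int.two_mul_toNat_choose_two_s1 {m : ℤ} (hm : 0 ≤ m) :
    2 * (m.toNat.choose 2 : ℤ) = m ^ 2 - m := by
  obtain ⟨k, rfl⟩ := Int.eq_ofNat_of_zero_le hm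
  rw [Int.toNat_natCast]
  qify
  rw [Nat.cast_choose_two]
  ring

theorem Finset.sum_filter_pos_sub_one_mul_sub_two {ι : Type*} [Fintype ι] {d : ι → ℤ}
    (hd : ∀ i, 0 ≤ d i) :
    ∑ i with 0 < d i, (d i - 1) * (d i - 2)
      = ∑ i, d i ^ 2 - 3 * ∑ i, d i + 2 * Fintype.card ι - 2 * #{i | d i = 0} := by
  have hpos : ∀ i, 0 < d i ↔ ¬d i = 0 := fun i => (hd i).lt_iff_ne'
  have hzero : ∀ i ∈ ({i | d i = 0} : Finset ι), (d i - 1) * (d i - 2) = 2 := fun i hi => by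
    rw [(mem_filter.mp hi).2]; norm_num
  have hsplit := sum_filter_not_add_sum_filter univ (fun i => d i = 0)
    fun i => (d i - 1) * (d i - 2)
  simp only [← hpos, sum_congr rfl hzero, sum_const, nsmul_eq_mul] at hsplit
  have hexpand :
      ∑ i, (d i - 1) * (d i - 2) = ∑ i, d i ^ 2 - 3 * ∑ i, d i + 2 * Fintype.card ι := by
    simp only [show ∀ i, (d i - 1) * (d i - 2) = d i ^ 2 - 3 * d i + 2 from fun i => by ring,
      sum_add_distrib, sum_sub_distrib, mul_sum, sum_const, card_univ, nsmul_eq_mul]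
    ring
  linear_combination hsplit + hexpand

namespace Matrix

variable {ι : Type*} [Fintype ι]

theorem apply_mul_apply_eq_zero_of_mul_self_eq_zero {R : Type*} [Semiring R] [PartialOrder R]
    [IsOrderedRing R] {N : Matrix ι ι R} (hnn : ∀ i j, 0 ≤ N i j) (hN2 : N * N = 0)
    (i j k : ι) : N i j * N j k = 0 := by
  have hik : ∑ l, N i l * N l k = 0 := by rw [← mul_apply, hN2, zero_apply]
  exact (sum_eq_zero_iff_of_nonneg fun l _ => mul_nonneg (hnn i l) (hnn l k)).mp hik j
    (mem_univ j)

theorem sum_col_mul_sum_row_eq_zero {R : Type*} [CommSemiring R] [PartialOrder R]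
    [IsOrderedRing R] {N : Matrix ι ι R} (hnn : ∀ i j, 0 ≤ N i j) (hN2 : N * N = 0) (i : ι) :
    (∑ j, N j i) * ∑ k, N i k = 0 := by
  rw [sum_mul_sum]
  exact sum_eq_zero fun j _ => sum_eq_zero fun k _ =>
    apply_mul_apply_eq_zero_of_mul_self_eq_zero hnn hN2 j i k

theorem sum_sum_mul_transpose_self {R : Type*} [CommSemiring R] (N : Matrix ι ι R) :
    ∑ i, ∑ j, (N * Nᵀ) i j = ∑ k, (∑ i, N i k) ^ 2 := by
  simp only [mul_apply, transpose_apply, sq, sum_mul_sum]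
  exact (sum_congr rfl fun i _ => sum_comm).trans sum_comm

theorem mul_transpose_self_apply_self_of_zero_or_one {R : Type*} [Semiring R]
    {N : Matrix ι ι R} (h01 : ∀ i j, N i j = 0 ∨ N i j = 1) (i : ι) :
    (N * Nᵀ) i i = ∑ j, N i j := by
  simp only [mul_apply, transpose_apply]
  exact sum_congr rfl fun j _ => by rcases h01 i j with h | h <;> simp [h]

theorem IsSymm.trace_mul_self {R : Type*} [CommSemiring R] {P : Matrix ι ι R}
    (hP : P.IsSymm) : (P * P).trace = ∑ i, ∑ j, P i j ^ 2 := by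
  simp only [trace, diag, mul_apply, sq, hP.apply]

theorem trace_sq_mul_transpose_self_of_zero_or_one [LinearOrder ι] {N : Matrix ι ι ℤ}
    (h01 : ∀ i j, N i j = 0 ∨ N i j = 1) (hN2 : N * N = 0) :
    (N * Nᵀ * (N * Nᵀ)).trace
      = ∑ i, ((∑ j, N i j) + ∑ j, N j i) ^ 2 - ∑ i, ∑ j, N i j
        + 4 * ∑ i, ∑ j, if i < j then (((N * Nᵀ) i j).toNat.choose 2 : ℤ) else 0 := by
  set P := N * Nᵀ with hP
  have hnn : ∀ i j, 0 ≤ N i j := fun i j => by rcases h01 i j with h | h <;> simp [h]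
  have hPnn : ∀ i j, 0 ≤ P i j := fun i j =>
    sum_nonneg fun k _ => mul_nonneg (hnn i k) (hnn j k)
  have hPsymm : P.IsSymm := isSymm_mul_transpose_self N
  have hsq : ∑ i, ∑ j, P i j ^ 2
      = ∑ i, ∑ j, P i j + 2 * ∑ i, ∑ j, ((P i j).toNat.choose 2 : ℤ) := by
    simp only [mul_sum, ← sum_add_distrib, Int.two_mul_toNat_choose_two_s1 (hPnn _ _),
      add_sub_cancel]
  have hchoose := sum_sum_eq_sum_diag_add_two_nsmul_sum_sum_lt
    (fun i j => ((P i j).toNat.choose 2 : ℤ)) fun i j => by rw [hPsymm.apply]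
  have hdiag : 2 * ∑ i, ((P i i).toNat.choose 2 : ℤ)
      = ∑ i, (∑ j, N i j) ^ 2 - ∑ i, ∑ j, N i j := by
    simp only [mul_sum, Int.two_mul_toNat_choose_two_s1 (hPnn _ _)]
    simp only [hP, mul_transpose_self_apply_self_of_zero_or_one h01, sum_sub_distrib]
  have hdeg : ∀ i, ((∑ j, N i j) + ∑ j, N j i) ^ 2 = (∑ j, N i j) ^ 2 + (∑ j, N j i) ^ 2 :=
    fun i => by linear_combination 2 * sum_col_mul_sum_row_eq_zero hnn hN2 i
  rw [hPsymm.trace_mul_self, hsq, sum_sum_mul_transpose_self, sum_congr rfl fun i _ => hdeg i,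
    sum_add_distrib]
  rw [two_nsmul] at hchoose
  linear_combination 2 * hchoose + hdiag

end Matrix

/-- Theorem 1.1, variant (1.2) of the paper: the second coefficient of the Coxeter
polynomial of a bipartite quiver without parallel arrows, expressed via the number
`v` of isolated vertices. -/
theorem coxeter_second_coeff_bipartite_quiver_variant (n : ℕ) (hn : 2 ≤ n)
    (N : Matrix (Fin n) (Fin n) ℤ)
    (h01 : ∀ i j, N i j = 0 ∨ N i j = 1) (hN2 : N * N = 0) :
    let C : Matrix (Fin n) (Fin n) ℤ := 1 - N
    let φ : ℤ[X] := ((X : ℤ[X]) • C.map Polynomial.C + Cᵀ.map Polynomial.C).det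
    let e : ℤ := ∑ i, ∑ j, N i j
    let d : Fin n → ℤ := fun i => (∑ j, N i j) + (∑ j, N j i)
    let q : ℤ := ∑ i, ∑ j, if i < j then (((N * Nᵀ) i j).toNat.choose 2 : ℤ) else 0
    let v : ℤ := (Finset.univ.filter (fun i => d i = 0)).card
    2 * φ.coeff (n - 2) =
        (n - e) * (n + 1 - e) - 2 * v - 4 * q -
          ∑ i ∈ Finset.univ.filter (fun i => 0 < d i), (d i - 1) * (d i - 2) := by
  intro C φ e d q v
  have hinv : (1 + N) * (1 - N) = 1 := by
    rw [mul_sub, mul_one, add_mul, one_mul, hN2, add_zero, add_sub_cancel_right]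
  have hφ : φ = (-((1 + N) * (1 - Nᵀ))).charpoly := by
    simp only [φ, C]
    rw [det_X_smul_add_transpose hinv, det_one_sub_of_isNilpotent_s1 ⟨2, by rw [sq, hN2]⟩,
      map_one, one_mul, transpose_sub, transpose_one]
  have htrace : (N * Nᵀ).trace = e :=
    sum_congr rfl fun i _ => mul_transpose_self_apply_self_of_zero_or_one h01 i
  have hcoeff := two_mul_coeff_charpoly_card_sub_two (by simpa using hn) (-((1 + N) * (1 - Nᵀ)))
  rw [← hφ, trace_neg, neg_sq, neg_mul_neg, trace_sq_one_add_mul_one_sub_transpose_s1 hN2,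
    trace_one_add_mul_one_sub_transpose_s1, trace_sq_mul_transpose_self_of_zero_or_one h01 hN2,
    htrace, Fintype.card_fin] at hcoeff
  have hnn : ∀ i j, 0 ≤ N i j := fun i j => by rcases h01 i j with h | h <;> simp [h]
  have hdeg := sum_filter_pos_sub_one_mul_sub_two (d := d) fun i =>
    add_nonneg (sum_nonneg fun j _ => hnn i j) (sum_nonneg fun j _ => hnn j i)
  have hsum : ∑ i, d i = 2 * e := by
    simp only [d, sum_add_distrib, sum_comm (f := fun i j => N j i)]
    ring
  rw [Fintype.card_fin] at hdeg
  linear_combination hcoeff + hdeg - 3 * hsum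
end

section
/- Let n ≥ 2, let G be a simple graph on vertex set Fin n which is a tree, and let N be an n×n matrix over ℤ with entries in {0,1} such that N + Nᵀ equals the adjacency matrix of G and N² = 0. Set C = I − N, φ(X) = det(X•C + Cᵀ), and a₂ = φ.coeff(n−2). Then a₂ ≤ 1, and a₂ = 1 if and only if every vertex of G has degree at most 2 (i.e., G is the path graph / Dynkin diagram A_n). -/
open Polynomial Matrix Finset

variable {n : ℕ}

lemma fiber_swap {a b : Fin n} (hab : a ≠ b) :
    ((Finset.univ : Finset (Fin n)).offDiag.filter
        (fun p => Equiv.swap p.1 p.2 = Equiv.swap a b)) =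
      ({(a, b), (b, a)} : Finset (Fin n × Fin n)) := by
  ext ⟨i, j⟩
  simp only [Finset.mem_filter, Finset.mem_offDiag, Finset.mem_univ, true_and,
    Finset.mem_insert, Finset.mem_singleton, Prod.mk.injEq]
  constructor
  · rintro ⟨hij, hs⟩
    have h1 : Equiv.swap i j i = Equiv.swap a b i := by rw [hs]
    rw [Equiv.swap_apply_left] at h1
    rcases eq_or_ne i a with rfl | hia
    · rw [Equiv.swap_apply_left] at h1; exact Or.inl ⟨rfl, h1⟩
    · rcases eq_or_ne i b with rfl | hib
      · rw [Equiv.swap_apply_right] at h1; exact Or.inr ⟨rfl, h1⟩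
      · rw [Equiv.swap_apply_of_ne_of_ne hia hib] at h1; exact absurd h1.symm hij
  · rintro (⟨rfl, rfl⟩ | ⟨rfl, rfl⟩)
    · exact ⟨hab, rfl⟩
    · exact ⟨hab.symm, Equiv.swap_comm _ _⟩

lemma fiber_pair {a b : Fin n} (hab : a ≠ b) :
    ((Finset.univ : Finset (Fin n)).offDiag.filter
        (fun p => ({p.1, p.2} : Finset (Fin n)) = {a, b})) =
      ({(a, b), (b, a)} : Finset (Fin n × Fin n)) := by
  ext ⟨i, j⟩
  simp only [Finset.mem_filter, Finset.mem_offDiag, Finset.mem_univ, true_and,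
    Finset.mem_insert, Finset.mem_singleton, Prod.mk.injEq]
  constructor
  · rintro ⟨hij, hs⟩
    have hi : i = a ∨ i = b := by
      have : i ∈ ({a, b} : Finset (Fin n)) := hs ▸ (Finset.mem_insert_self i {j})
      simpa using this
    have hj : j = a ∨ j = b := by
      have : j ∈ ({a, b} : Finset (Fin n)) := by rw [← hs]; simp
      simpa using this
    rcases hi with rfl | rfl
    · rcases hj with rfl | rfl
      · exact absurd rfl hij
      · exact Or.inl ⟨rfl, rfl⟩
    · rcases hj with rfl | rfl
      · exact Or.inr ⟨rfl, rfl⟩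
      · exact absurd rfl hij
  · rintro (⟨rfl, rfl⟩ | ⟨rfl, rfl⟩)
    · exact ⟨hab, rfl⟩
    · exact ⟨hab.symm, Finset.pair_comm _ _⟩

lemma support_card_ne (σ : Equiv.Perm (Fin n)) (h1 : σ ≠ 1) (h2 : ¬ σ.IsSwap) :
    3 ≤ σ.support.card := by
  rcases Nat.lt_or_ge σ.support.card 3 with h | h
  · interval_cases hc : σ.support.card
    · exact absurd (Equiv.Perm.support_eq_empty_iff.mp (Finset.card_eq_zero.mp hc)) h1
    · exact absurd hc (Equiv.Perm.card_support_ne_one σ)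
    · exact absurd (Equiv.Perm.card_support_eq_two.mp hc) h2
  · exact h

lemma coeff_prod_of_big_support (hn : 2 ≤ n) (A : Matrix (Fin n) (Fin n) ℤ)
    (M : Matrix (Fin n) (Fin n) ℤ[X])
    (hMd : ∀ i, M i i = X + C (A i i)) (hMo : ∀ i j, i ≠ j → M i j = C (A i j))
    (σ : Equiv.Perm (Fin n)) (h3 : 3 ≤ σ.support.card) :
    (∏ i, M (σ i) i).coeff (n - 2) = 0 := by
  apply Polynomial.coeff_eq_zero_of_natDegree_lt
  have hfix : (Finset.univ.filter fun i : Fin n => σ i = i).card = n - σ.support.card := by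
    have hsupp : σ.support = Finset.univ.filter fun i => ¬ σ i = i := by
      ext i; simp [Equiv.Perm.mem_support]
    have := Finset.card_filter_add_card_filter_not
      (s := (Finset.univ : Finset (Fin n))) (p := fun i => σ i = i)
    rw [← hsupp] at this
    simp only [Finset.card_univ, Fintype.card_fin] at this
    omega
  calc (∏ i, M (σ i) i).natDegree ≤ ∑ i, (M (σ i) i).natDegree :=
        Polynomial.natDegree_prod_le _ _
    _ ≤ ∑ i : Fin n, (if σ i = i then 1 else 0) := by
        apply Finset.sum_le_sum
        intro i _
        by_cases hi : σ i = i
        · rw [hi, hMd i]; rw [if_pos rfl]; exact le_of_eq (Polynomial.natDegree_X_add_C _)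
        · rw [hMo _ _ hi, if_neg hi]; simp
    _ = (Finset.univ.filter fun i : Fin n => σ i = i).card :=
        (Finset.card_filter _ _).symm
    _ < n - 2 := by
        have hle : σ.support.card ≤ n := by simpa using σ.support.card_le_univ
        rw [hfix]; omega

lemma two_mul_coeff_det (hn : 2 ≤ n) (A : Matrix (Fin n) (Fin n) ℤ) :
    2 * (((X : ℤ[X]) • (1 : Matrix (Fin n) (Fin n) ℤ[X]) + A.map C).det).coeff (n - 2)
      = Matrix.trace A ^ 2 - Matrix.trace (A * A) := by
  classical
  set M : Matrix (Fin n) (Fin n) ℤ[X] := (X : ℤ[X]) • 1 + A.map C with hM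
  have hMd : ∀ i, M i i = X + C (A i i) := by
    intro i
    simp [hM, Matrix.add_apply, Matrix.smul_apply, Matrix.one_apply_eq, Matrix.map_apply,
      smul_eq_mul]
  have hMo : ∀ i j, i ≠ j → M i j = C (A i j) := by
    intro i j h
    simp [hM, Matrix.add_apply, Matrix.smul_apply, Matrix.one_apply_ne h, Matrix.map_apply]
  set F : Equiv.Perm (Fin n) → ℤ :=
    fun σ => (Equiv.Perm.sign σ : ℤ) * (∏ i, M (σ i) i).coeff (n - 2) with hF
  have hcoeff : (M.det).coeff (n - 2) = ∑ σ : Equiv.Perm (Fin n), F σ := by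
    rw [Matrix.det_apply, Polynomial.finset_sum_coeff]
    refine Finset.sum_congr rfl fun σ _ => ?_
    rw [Polynomial.coeff_smul, Units.smul_def, zsmul_eq_mul]
    rfl
  have hvanish : ∀ σ ∈ (Finset.univ : Finset (Equiv.Perm (Fin n))), F σ ≠ 0 →
      (σ = 1 ∨ σ.IsSwap) := by
    intro σ _ hσ
    by_contra hcon
    push_neg at hcon
    refine hσ ?_
    rw [hF]
    simp [coeff_prod_of_big_support hn A M hMd hMo σ (support_card_ne σ hcon.1 hcon.2)]
  have hsplit : (M.det).coeff (n - 2)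
      = F 1 + ∑ σ ∈ Finset.univ.filter Equiv.Perm.IsSwap, F σ := by
    rw [hcoeff, ← Finset.sum_filter_of_ne hvanish]
    have hins : (Finset.univ.filter fun σ : Equiv.Perm (Fin n) => σ = 1 ∨ σ.IsSwap)
        = insert 1 (Finset.univ.filter Equiv.Perm.IsSwap) := by
      ext σ
      simp only [Finset.mem_filter, Finset.mem_univ, true_and, Finset.mem_insert]
    have h1ns : (1 : Equiv.Perm (Fin n)) ∉ Finset.univ.filter Equiv.Perm.IsSwap := by
      simp only [Finset.mem_filter, Finset.mem_univ, true_and]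
      rintro ⟨x, y, hxy, h⟩
      exact hxy (Equiv.swap_eq_one_iff.mp h.symm)
    rw [hins, Finset.sum_insert h1ns]
  have hone : F 1 = ∑ t ∈ (Finset.univ : Finset (Fin n)).powersetCard 2, ∏ i ∈ t, A i i := by
    have hpr : (∏ i, M ((1 : Equiv.Perm (Fin n)) i) i) = ∏ i, (X + C (A i i)) :=
      Finset.prod_congr rfl fun i _ => by rw [Equiv.Perm.one_apply, hMd]
    have hc := Finset.prod_X_add_C_coeff (Finset.univ : Finset (Fin n)) (fun i => A i i)
      (k := n - 2) (by simp)
    rw [hF]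
    simp only [hpr, Equiv.Perm.sign_one, Units.val_one, one_mul, hc]
    congr 1
    simp only [Finset.card_univ, Fintype.card_fin]
    congr 1
    omega
  have hswapval : ∀ a b : Fin n, a ≠ b → F (Equiv.swap a b) = -(A a b * A b a) := by
    intro a b hab
    have hprod : (∏ i, M (Equiv.swap a b i) i)
        = (C (A b a) * C (A a b)) * ∏ i ∈ ({a, b} : Finset (Fin n))ᶜ, (X + C (A i i)) := by
      rw [← Finset.prod_mul_prod_compl ({a, b} : Finset (Fin n))]
      congr 1
      · rw [Finset.prod_pair hab, Equiv.swap_apply_left, Equiv.swap_apply_right,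
          hMo b a hab.symm, hMo a b hab]
      · refine Finset.prod_congr rfl fun i hi => ?_
        rw [Finset.mem_compl] at hi
        simp only [Finset.mem_insert, Finset.mem_singleton] at hi
        push_neg at hi
        rw [Equiv.swap_apply_of_ne_of_ne hi.1 hi.2, hMd]
    have hQm : (∏ i ∈ ({a, b} : Finset (Fin n))ᶜ, (X + C (A i i))).Monic :=
      Polynomial.monic_prod_of_monic _ _ fun i _ => Polynomial.monic_X_add_C _
    have hQd : (∏ i ∈ ({a, b} : Finset (Fin n))ᶜ, (X + C (A i i))).natDegree = n - 2 := by
      rw [Polynomial.natDegree_prod _ _ (fun i _ => (Polynomial.monic_X_add_C (A i i)).ne_zero)]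
      simp only [Polynomial.natDegree_X_add_C, Finset.sum_const, smul_eq_mul, mul_one]
      rw [Finset.card_compl, Finset.card_pair hab]
      simp
    have hco : (∏ i ∈ ({a, b} : Finset (Fin n))ᶜ, (X + C (A i i))).coeff (n - 2) = 1 := by
      rw [← hQd]; exact hQm.coeff_natDegree
    rw [hF]
    simp only [hprod]
    rw [← Polynomial.C_mul, Polynomial.coeff_C_mul, hco, mul_one, Equiv.Perm.sign_swap hab]
    simp only [Units.val_neg, Units.val_one]
    ring
  have hsum2 : ∑ p ∈ (Finset.univ : Finset (Fin n)).offDiag, F (Equiv.swap p.1 p.2)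
      = 2 * ∑ σ ∈ Finset.univ.filter Equiv.Perm.IsSwap, F σ := by
    rw [Finset.sum_comp F (fun p : Fin n × Fin n => Equiv.swap p.1 p.2)]
    have himg : (Finset.univ : Finset (Fin n)).offDiag.image
          (fun p : Fin n × Fin n => Equiv.swap p.1 p.2)
        = Finset.univ.filter Equiv.Perm.IsSwap := by
      ext σ
      simp only [Finset.mem_image, Finset.mem_filter, Finset.mem_univ, true_and,
        Finset.mem_offDiag]
      constructor
      · rintro ⟨⟨x, y⟩, hxy, rfl⟩; exact ⟨x, y, hxy, rfl⟩
      · rintro ⟨x, y, hxy, rfl⟩; exact ⟨(x, y), hxy, rfl⟩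
    rw [himg, Finset.mul_sum]
    refine Finset.sum_congr rfl fun σ hσ => ?_
    rw [Finset.mem_filter] at hσ
    obtain ⟨x, y, hxy, rfl⟩ := hσ.2
    rw [fiber_swap hxy, Finset.card_insert_of_notMem (by
      simp only [Finset.mem_singleton, Prod.mk.injEq]
      rintro ⟨rfl, -⟩
      exact hxy rfl), Finset.card_singleton]
    norm_num [nsmul_eq_mul]
  have hsum3 : ∑ p ∈ (Finset.univ : Finset (Fin n)).offDiag, A p.1 p.1 * A p.2 p.2
      = 2 * ∑ t ∈ (Finset.univ : Finset (Fin n)).powersetCard 2, ∏ i ∈ t, A i i := by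
    have step : ∑ p ∈ (Finset.univ : Finset (Fin n)).offDiag, A p.1 p.1 * A p.2 p.2
        = ∑ p ∈ (Finset.univ : Finset (Fin n)).offDiag,
            (fun t : Finset (Fin n) => ∏ i ∈ t, A i i) ({p.1, p.2} : Finset (Fin n)) := by
      refine Finset.sum_congr rfl fun p hp => ?_
      rw [Finset.mem_offDiag] at hp
      exact (Finset.prod_pair (f := fun i => A i i) hp.2.2).symm
    rw [step, Finset.sum_comp (fun t : Finset (Fin n) => ∏ i ∈ t, A i i)
      (fun p : Fin n × Fin n => ({p.1, p.2} : Finset (Fin n)))]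
    have himg : (Finset.univ : Finset (Fin n)).offDiag.image
          (fun p : Fin n × Fin n => ({p.1, p.2} : Finset (Fin n)))
        = (Finset.univ : Finset (Fin n)).powersetCard 2 := by
      ext t
      simp only [Finset.mem_image, Finset.mem_powersetCard_univ, Finset.mem_offDiag,
        Finset.mem_univ, true_and]
      constructor
      · rintro ⟨⟨x, y⟩, hxy, rfl⟩; exact Finset.card_pair hxy
      · intro hc
        obtain ⟨x, y, hxy, rfl⟩ := Finset.card_eq_two.mp hc
        exact ⟨(x, y), hxy, rfl⟩
    rw [himg, Finset.mul_sum]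
    refine Finset.sum_congr rfl fun t ht => ?_
    rw [Finset.mem_powersetCard_univ] at ht
    obtain ⟨x, y, hxy, rfl⟩ := Finset.card_eq_two.mp ht
    rw [fiber_pair hxy, Finset.card_insert_of_notMem (by
      simp only [Finset.mem_singleton, Prod.mk.injEq]
      rintro ⟨rfl, -⟩
      exact hxy rfl), Finset.card_singleton]
    norm_num [nsmul_eq_mul]
  -- trace identities
  have htr1 : Matrix.trace A ^ 2
      = ∑ p ∈ (Finset.univ : Finset (Fin n)) ×ˢ (Finset.univ : Finset (Fin n)),
          A p.1 p.1 * A p.2 p.2 := by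
    rw [sq, Matrix.trace, Finset.sum_mul_sum, ← Finset.sum_product']
    rfl
  have htr2 : Matrix.trace (A * A)
      = ∑ p ∈ (Finset.univ : Finset (Fin n)) ×ˢ (Finset.univ : Finset (Fin n)),
          A p.1 p.2 * A p.2 p.1 := by
    rw [Matrix.trace]
    simp only [Matrix.diag_apply, Matrix.mul_apply]
    rw [← Finset.sum_product']
  have hsplitprod : ∀ f : Fin n × Fin n → ℤ,
      ∑ p ∈ (Finset.univ : Finset (Fin n)) ×ˢ (Finset.univ : Finset (Fin n)), f p
        = ∑ p ∈ (Finset.univ : Finset (Fin n)).diag, f p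
          + ∑ p ∈ (Finset.univ : Finset (Fin n)).offDiag, f p := by
    intro f
    rw [← Finset.diag_union_offDiag, Finset.sum_union (Finset.disjoint_diag_offDiag _)]
  have hdiageq : ∑ p ∈ (Finset.univ : Finset (Fin n)).diag, A p.1 p.1 * A p.2 p.2
      = ∑ p ∈ (Finset.univ : Finset (Fin n)).diag, A p.1 p.2 * A p.2 p.1 := by
    refine Finset.sum_congr rfl fun p hp => ?_
    rw [Finset.mem_diag] at hp
    rw [← hp.2]
  have hswapF : ∑ p ∈ (Finset.univ : Finset (Fin n)).offDiag, F (Equiv.swap p.1 p.2)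
      = - ∑ p ∈ (Finset.univ : Finset (Fin n)).offDiag, A p.1 p.2 * A p.2 p.1 := by
    rw [← Finset.sum_neg_distrib]
    refine Finset.sum_congr rfl fun p hp => ?_
    rw [Finset.mem_offDiag] at hp
    exact hswapval p.1 p.2 hp.2.2
  rw [hsplit]
  rw [htr1, htr2, hsplitprod, hsplitprod]
  rw [hswapF] at hsum2
  linarith [hsum2, hsum3, hone, hdiageq]



lemma det_one_sub_eq_one (N : Matrix (Fin n) (Fin n) ℤ) (hN2 : N * N = 0) :
    (1 - N).det = 1 := by
  have hnil : IsNilpotent N := ⟨2, by rw [pow_two]; exact hN2⟩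
  have hchar : N.charpoly = X ^ (Fintype.card (Fin n)) := by
    have h := Matrix.isNilpotent_charpoly_sub_pow_of_isNilpotent hnil
    have h0 : N.charpoly - X ^ (Fintype.card (Fin n)) = 0 := h.eq_zero
    linear_combination (norm := ring_nf) h0
  have hmap : (N.charmatrix.map (Polynomial.evalRingHom (1 : ℤ))) = 1 - N := by
    ext i j
    by_cases hij : i = j
    · subst hij
      rw [Matrix.map_apply, Matrix.charmatrix_apply_eq]
      simp [Matrix.one_apply, Matrix.sub_apply]
    · rw [Matrix.map_apply, Matrix.charmatrix_apply_ne _ _ _ hij]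
      simp [Matrix.one_apply_ne hij, Matrix.sub_apply]
  have hdet := RingHom.map_det (Polynomial.evalRingHom (1 : ℤ)) N.charmatrix
  rw [RingHom.mapMatrix_apply] at hdet
  calc (1 - N).det = ((N.charmatrix.map (Polynomial.evalRingHom (1 : ℤ)))).det := by rw [hmap]
    _ = (Polynomial.evalRingHom (1 : ℤ)) N.charmatrix.det := hdet.symm
    _ = Polynomial.eval 1 N.charpoly := rfl
    _ = 1 := by rw [hchar]; simp


lemma common_nbr_unique {V : Type*} {G : SimpleGraph V} (hG : G.IsAcyclic)
    {i j k l : V} (hij : i ≠ j) (hik : G.Adj i k) (hjk : G.Adj j k)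
    (hil : G.Adj i l) (hjl : G.Adj j l) : k = l := by
  have h := SimpleGraph.isAcyclic_iff_path_unique.mp hG
  have hp1 : (SimpleGraph.Walk.cons hik (SimpleGraph.Walk.cons hjk.symm
      SimpleGraph.Walk.nil)).IsPath := by
    simp [SimpleGraph.Walk.isPath_def, hik.ne, hij, hjk.ne']
  have hp2 : (SimpleGraph.Walk.cons hil (SimpleGraph.Walk.cons hjl.symm
      SimpleGraph.Walk.nil)).IsPath := by
    simp [SimpleGraph.Walk.isPath_def, hil.ne, hij, hjl.ne']
  have heq := h ⟨_, hp1⟩ ⟨_, hp2⟩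
  have hs := congrArg (fun p : G.Path i j => (p : G.Walk i j).support) heq
  simpa using hs

set_option maxHeartbeats 1000000 in
/-- Corollary 1.3 (Happel), second part: the second coefficient `a₂` of the Coxeter
polynomial of a tree on `n ≥ 2` vertices satisfies `a₂ ≤ 1`, with equality iff every
vertex has degree at most `2`, i.e. the tree is the Dynkin diagram `Aₙ`. -/
theorem coxeter_second_coeff_tree_le_one (n : ℕ) (hn : 2 ≤ n) (G : SimpleGraph (Fin n))
    [DecidableRel G.Adj] (hT : G.IsTree) (N : Matrix (Fin n) (Fin n) ℤ)
    (h01 : ∀ i j, N i j = 0 ∨ N i j = 1)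
    (hNA : N + Nᵀ = G.adjMatrix ℤ) (hN2 : N * N = 0) :
    let C : Matrix (Fin n) (Fin n) ℤ := 1 - N
    let φ : ℤ[X] := ((X : ℤ[X]) • C.map Polynomial.C + Cᵀ.map Polynomial.C).det
    φ.coeff (n - 2) ≤ 1 ∧
      (φ.coeff (n - 2) = 1 ↔ ∀ i, G.degree i ≤ 2) := by
  classical
  intro C φ
  -- setup
  set Φ : Matrix (Fin n) (Fin n) ℤ := (1 + N) * (1 - Nᵀ) with hΦdef
  have hNtNt : Nᵀ * Nᵀ = 0 := by
    rw [← Matrix.transpose_mul, hN2, Matrix.transpose_zero]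
  have honemul : (1 - N) * (1 + N) = 1 := by
    have h : (1 - N) * (1 + N) = 1 + N - N - N * N := by noncomm_ring
    rw [h, hN2, sub_zero]; abel
  have hCΦ : C * Φ = Cᵀ := by
    show (1 - N) * ((1 + N) * (1 - Nᵀ)) = (1 - N)ᵀ
    rw [← Matrix.mul_assoc, honemul, Matrix.one_mul, Matrix.transpose_sub,
      Matrix.transpose_one]
  have hfact : (X : ℤ[X]) • C.map Polynomial.C + Cᵀ.map Polynomial.C
      = (C.map Polynomial.C) *
        ((X : ℤ[X]) • (1 : Matrix (Fin n) (Fin n) ℤ[X]) + Φ.map Polynomial.C) := by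
    rw [Matrix.mul_add, Matrix.mul_smul, Matrix.mul_one, ← Matrix.map_mul, hCΦ]
  have hdetC : (C.map Polynomial.C).det = 1 := by
    have hh := RingHom.map_det (Polynomial.C : ℤ →+* ℤ[X]) C
    rw [RingHom.mapMatrix_apply] at hh
    rw [← hh]
    have hdC : C.det = 1 := det_one_sub_eq_one N hN2
    rw [hdC, Polynomial.C_1]
  have hφψ : φ = (((X : ℤ[X]) • (1 : Matrix (Fin n) (Fin n) ℤ[X]) + Φ.map Polynomial.C)).det := by
    show ((X : ℤ[X]) • C.map Polynomial.C + Cᵀ.map Polynomial.C).det = _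
    rw [hfact, Matrix.det_mul, hdetC, one_mul]
  have hkey := two_mul_coeff_det hn Φ
  rw [← hφψ] at hkey
  clear hφψ hfact hdetC
  clear_value φ C
  -- trace computations
  set P : Matrix (Fin n) (Fin n) ℤ := N * Nᵀ with hPdef
  have hNP : N * P = 0 := by rw [hPdef, ← Matrix.mul_assoc, hN2, Matrix.zero_mul]
  have hPNt : P * Nᵀ = 0 := by rw [hPdef, Matrix.mul_assoc, hNtNt, Matrix.mul_zero]
  have hΦexp : Φ = 1 + N - Nᵀ - P := by rw [hΦdef, hPdef]; noncomm_ring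
  have htrΦ : Matrix.trace Φ = (n : ℤ) - Matrix.trace P := by
    rw [hΦexp]
    simp only [Matrix.trace_add, Matrix.trace_sub, Matrix.trace_one, Matrix.trace_transpose,
      Fintype.card_fin]
    ring
  have hΦ2exp : Φ * Φ = (1 + N - Nᵀ - P) + (N + N*N - N*Nᵀ - N*P)
      - (Nᵀ + Nᵀ*N - Nᵀ*Nᵀ - Nᵀ*P) - (P + P*N - P*Nᵀ - P*P) := by
    rw [hΦexp]; noncomm_ring
  have htrΦ2 : Matrix.trace (Φ * Φ)
      = (n : ℤ) - 4 * Matrix.trace P + Matrix.trace (P * P) := by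
    rw [hΦ2exp, hN2, hNtNt, hNP, hPNt]
    have e1 : Matrix.trace (Nᵀ * N) = Matrix.trace P := by
      rw [Matrix.trace_mul_comm, hPdef]
    have e2 : Matrix.trace (Nᵀ * P) = 0 := by
      rw [Matrix.trace_mul_comm, hPNt, Matrix.trace_zero]
    have e3 : Matrix.trace (P * N) = 0 := by
      rw [Matrix.trace_mul_comm, hNP, Matrix.trace_zero]
    have e4 : Matrix.trace (N * Nᵀ) = Matrix.trace P := by rw [hPdef]
    simp only [Matrix.trace_add, Matrix.trace_sub, Matrix.trace_one, Matrix.trace_transpose,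
      Matrix.trace_zero, Fintype.card_fin, e1, e2, e3, e4]
    ring
  -- entry facts
  have hN0 : ∀ i k, (0:ℤ) ≤ N i k := fun i k => by rcases h01 i k with h | h <;> simp [h]
  have hNsq : ∀ i k, N i k * N i k = N i k := fun i k => by rcases h01 i k with h | h <;> simp [h]
  have hAdjapp : ∀ i k, N i k + N k i = (G.adjMatrix ℤ) i k := by
    intro i k
    have := congrFun (congrFun hNA i) k
    simpa [Matrix.add_apply, Matrix.transpose_apply] using this
  have hadj_of_N : ∀ i k, N i k = 1 → G.Adj i k := by
    intro i k h1
    by_contra hna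
    have h0 : (G.adjMatrix ℤ) i k = 0 := by simp [SimpleGraph.adjMatrix_apply, hna]
    have h2 := hAdjapp i k
    rw [h0, h1] at h2
    have := hN0 k i
    linarith
  have hterm0 : ∀ l i k, N l i * N i k = 0 := by
    intro l i k
    have h := congrFun (congrFun hN2 l) k
    rw [Matrix.mul_apply, Matrix.zero_apply] at h
    exact (Finset.sum_eq_zero_iff_of_nonneg
      (fun m _ => mul_nonneg (hN0 _ _) (hN0 _ _))).mp h i (Finset.mem_univ i)
  -- degrees
  have hd : ∀ i, ∑ k, (G.adjMatrix ℤ) i k = (G.degree i : ℤ) := by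
    intro i
    rw [show ((G.degree i : ℤ)) = (((Finset.univ.filter (G.Adj i)).card : ℕ) : ℤ) by
      rw [SimpleGraph.degree, SimpleGraph.neighborFinset_eq_filter]]
    rw [← Finset.sum_boole]
    exact Finset.sum_congr rfl fun k _ => by simp [SimpleGraph.adjMatrix_apply]
  have hedge : G.edgeFinset.card + 1 = n := by simpa using hT.card_edgeFinset
  have hhand : ∑ i, G.degree i = 2 * G.edgeFinset.card := G.sum_degrees_eq_twice_card_edges
  have hsumd : ∑ i, (G.degree i : ℤ) = 2 * ((n:ℤ) - 1) := by
    have hc : (∑ i, (G.degree i : ℤ)) = ((∑ i, G.degree i : ℕ) : ℤ) := by push_cast; rfl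
    rw [hc, hhand]
    push_cast
    omega
  -- row and column sums
  set r : Fin n → ℤ := fun i => ∑ k, N i k with hrdef
  set c : Fin n → ℤ := fun i => ∑ k, N k i with hcdef
  have hrc0 : ∀ i, r i * c i = 0 := by
    intro i
    rw [show r i = ∑ k, N i k from rfl, show c i = ∑ k, N k i from rfl,
      Finset.sum_mul_sum]
    apply Finset.sum_eq_zero
    intro k _
    apply Finset.sum_eq_zero
    intro l _
    rw [mul_comm]
    exact hterm0 l i k
  have hrcd : ∀ i, r i + c i = (G.degree i : ℤ) := by
    intro i
    rw [← hd i, show r i = ∑ k, N i k from rfl, show c i = ∑ k, N k i from rfl,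
      ← Finset.sum_add_distrib]
    exact Finset.sum_congr rfl fun k _ => hAdjapp i k
  have hrapp : ∀ i, r i = ∑ k, N i k := fun i => rfl
  have hcapp : ∀ i, c i = ∑ k, N k i := fun i => rfl
  have hcr : ∑ i, c i = ∑ i, r i := by
    simp only [hrapp, hcapp]
    exact Finset.sum_comm
  have hsumr : ∑ i, r i = (n:ℤ) - 1 := by
    have h2 : ∑ i, (r i + c i) = 2 * ((n:ℤ) - 1) := by
      rw [Finset.sum_congr rfl fun i _ => hrcd i, hsumd]
    rw [Finset.sum_add_distrib, hcr] at h2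
    linarith
  have hPapp : ∀ i j, P i j = ∑ k, N i k * N j k := by
    intro i j
    rw [hPdef]
    simp [Matrix.mul_apply, Matrix.transpose_apply]
  have hPdiag : ∀ i, P i i = r i := by
    intro i
    rw [hPapp, show r i = ∑ k, N i k from rfl]
    exact Finset.sum_congr rfl fun k _ => hNsq i k
  have htrP : Matrix.trace P = (n:ℤ) - 1 := by
    rw [Matrix.trace, ← hsumr]
    exact Finset.sum_congr rfl fun i _ => hPdiag i
  have hPsymm : ∀ i j, P j i = P i j := by
    intro i j
    rw [hPapp, hPapp]
    exact Finset.sum_congr rfl fun k _ => mul_comm _ _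
  have huniq : ∀ i j k l, i ≠ j → N i k = 1 → N j k = 1 → N i l = 1 → N j l = 1 → k = l := by
    intro i j k l hij h1 h2 h3 h4
    exact common_nbr_unique hT.IsAcyclic hij (hadj_of_N i k h1) (hadj_of_N j k h2)
      (hadj_of_N i l h3) (hadj_of_N j l h4)
  have hPoff : ∀ i j, i ≠ j → P i j * P i j = P i j := by
    intro i j hij
    by_cases hex : ∃ k, N i k = 1 ∧ N j k = 1
    · obtain ⟨k, hk1, hk2⟩ := hex
      have h1 : P i j = 1 := by
        rw [hPapp, Finset.sum_eq_single_of_mem k (Finset.mem_univ k)]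
        · rw [hk1, hk2]; norm_num
        · intro b _ hbk
          rcases h01 i b with h | h
          · rw [h, zero_mul]
          · rcases h01 j b with h' | h'
            · rw [h', mul_zero]
            · exact absurd (huniq i j b k hij h h' hk1 hk2) hbk
      rw [h1]; norm_num
    · push_neg at hex
      have h0 : P i j = 0 := by
        rw [hPapp]
        apply Finset.sum_eq_zero
        intro k _
        rcases h01 i k with h | h
        · rw [h, zero_mul]
        · rcases h01 j k with h' | h'
          · rw [h', mul_zero]
          · exact absurd h' (hex k h)
      rw [h0]; norm_num
  have hsplit2 : ∀ f : Fin n → Fin n → ℤ,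
      ∑ i, ∑ j, f i j = ∑ i, f i i + ∑ p ∈ (Finset.univ : Finset (Fin n)).offDiag, f p.1 p.2 := by
    intro f
    rw [← Finset.sum_product' (s := Finset.univ) (t := Finset.univ),
      ← Finset.diag_union_offDiag (Finset.univ : Finset (Fin n)),
      Finset.sum_union (Finset.disjoint_diag_offDiag _), Finset.sum_diag]
  have hsumP : ∑ i, ∑ j, P i j = ∑ k, c k * c k := by
    calc ∑ i, ∑ j, P i j = ∑ i, ∑ j, ∑ k, N i k * N j k := by
          exact Finset.sum_congr rfl fun i _ => Finset.sum_congr rfl fun j _ => hPapp i j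
      _ = ∑ i, ∑ k, ∑ j, N i k * N j k := by
          exact Finset.sum_congr rfl fun i _ => Finset.sum_comm
      _ = ∑ k, ∑ i, ∑ j, N i k * N j k := Finset.sum_comm
      _ = ∑ k, c k * c k := by
          refine Finset.sum_congr rfl fun k _ => ?_
          rw [hcapp]
          exact (Finset.sum_mul_sum _ _ _ _).symm
  have htrPP : Matrix.trace (P * P) = ∑ i, (G.degree i : ℤ)^2 - ((n:ℤ) - 1) := by
    have h1 : Matrix.trace (P * P) = ∑ i, ∑ j, P i j * P i j := by
      rw [Matrix.trace]
      simp only [Matrix.diag_apply, Matrix.mul_apply]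
      exact Finset.sum_congr rfl fun i _ => Finset.sum_congr rfl fun j _ => by
        rw [hPsymm i j]
    rw [h1, hsplit2 (fun i j => P i j * P i j)]
    have h2 : ∑ p ∈ (Finset.univ : Finset (Fin n)).offDiag, P p.1 p.2 * P p.1 p.2
        = ∑ p ∈ (Finset.univ : Finset (Fin n)).offDiag, P p.1 p.2 := by
      refine Finset.sum_congr rfl fun p hp => ?_
      rw [Finset.mem_offDiag] at hp
      exact hPoff p.1 p.2 hp.2.2
    have h3 : ∑ p ∈ (Finset.univ : Finset (Fin n)).offDiag, P p.1 p.2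
        = ∑ k, c k * c k - ∑ i, r i := by
      have := hsplit2 (fun i j => P i j)
      rw [hsumP] at this
      have hdg : ∑ i, P i i = ∑ i, r i := Finset.sum_congr rfl fun i _ => hPdiag i
      linarith [this, hdg]
    have h4 : ∑ i, P i i * P i i = ∑ i, r i * r i := by
      refine Finset.sum_congr rfl fun i _ => by rw [hPdiag i]
    have h5 : ∑ i, r i * r i + ∑ k, c k * c k = ∑ i, (G.degree i : ℤ)^2 := by
      rw [← Finset.sum_add_distrib]
      refine Finset.sum_congr rfl fun i _ => ?_
      have := hrcd i
      have := hrc0 i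
      nlinarith [hrcd i, hrc0 i]
    rw [h2, h3, h4, hsumr]
    linarith [h5]
  -- final arithmetic
  have hkey2 : 2 * φ.coeff (n - 2) = (n:ℤ) - ∑ i, ((G.degree i : ℤ) - 1)^2 := by
    have hexp : ∑ i, ((G.degree i : ℤ) - 1)^2
        = ∑ i, (G.degree i:ℤ)^2 - 2 * ∑ i, (G.degree i:ℤ) + n := by
      rw [Finset.sum_congr rfl (fun i _ => by ring :
        ∀ i ∈ (Finset.univ : Finset (Fin n)), ((G.degree i : ℤ) - 1)^2
          = (G.degree i:ℤ)^2 - 2*(G.degree i:ℤ) + 1)]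
      rw [Finset.sum_add_distrib, Finset.sum_sub_distrib, ← Finset.mul_sum]
      simp [Finset.card_univ]
    rw [hkey, htrΦ, htrΦ2, htrPP, htrP]
    have h1 : ((n:ℤ) - ((n:ℤ) - 1))^2 = 1 := by ring
    rw [h1]
    linarith [hexp, hsumd]
  have hsumd1 : ∑ i, ((G.degree i:ℤ) - 1) = (n:ℤ) - 2 := by
    rw [Finset.sum_sub_distrib, hsumd]
    simp [Finset.card_univ]
    ring
  have hsum_ge : ∑ i, ((G.degree i:ℤ) - 1) ≤ ∑ i, ((G.degree i:ℤ) - 1)^2 :=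
    Finset.sum_le_sum fun i _ => Int.le_self_sq _
  have hge1 : ∀ i, 1 ≤ G.degree i := by
    intro i
    obtain ⟨j, hj⟩ := Fintype.exists_ne_of_one_lt_card (by simp; omega) i
    obtain ⟨w⟩ := hT.isConnected.preconnected i j
    cases w with
    | nil => exact absurd rfl hj
    | cons h p => exact (G.degree_pos_iff_exists_adj i).mpr ⟨_, h⟩
  refine ⟨by linarith [hkey2, hsum_ge, hsumd1], ?_, ?_⟩
  · intro h1
    have hsq : ∑ i, ((G.degree i:ℤ) - 1)^2 = (n:ℤ) - 2 := by
      rw [h1] at hkey2; linarith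
    have hzero : ∑ i, (((G.degree i:ℤ) - 1)^2 - ((G.degree i:ℤ) - 1)) = 0 := by
      rw [Finset.sum_sub_distrib, hsq, hsumd1]; ring
    have hterm := (Finset.sum_eq_zero_iff_of_nonneg
      (fun i _ => by linarith [Int.le_self_sq ((G.degree i:ℤ) - 1)])).mp hzero
    intro i
    have h := hterm i (Finset.mem_univ i)
    have h2 : ((G.degree i:ℤ) - 1) * ((G.degree i:ℤ) - 2) = 0 := by linear_combination h
    rcases mul_eq_zero.mp h2 with h' | h'
    · have : (G.degree i : ℤ) = 1 := by linarith
      omega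
    · have : (G.degree i : ℤ) = 2 := by linarith
      omega
  · intro hdeg
    have heq : ∑ i, ((G.degree i:ℤ) - 1)^2 = ∑ i, ((G.degree i:ℤ) - 1) := by
      refine Finset.sum_congr rfl fun i _ => ?_
      have h1 := hge1 i
      have h2 := hdeg i
      have h3 : G.degree i = 1 ∨ G.degree i = 2 := by omega
      rcases h3 with h | h <;> rw [h] <;> norm_num
    linarith [hkey2, hsumd1, heq, hsum_ge]
end

section
/- Let F be a field, n ≥ 1, and let p, q ∈ F[X] with deg p ≤ n, deg q ≤ n, and p(X²) = Σ_{j=0}^{n} q.coeff(j)·X^{n−j}·(X²+1)^{j} (p is represented by q). Write a_k = p.coeff(n−k) and c_j = q.coeff(n−j). Then c_j = 0 for all odd j, and for every 0 ≤ k ≤ n one has a_k = a_{n−k} = Σ_{j=0}^{min(k, n−k)} C(n−2j, k−j) · c_{2j}, where C(·,·) denotes the binomial coefficient. -/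
/-! Write `cⱼ = q.coeff (n - j)`, so that `p(X²) = Σ_d c_d X^d (X² + 1)^(n-d)`. Sorting the terms by
the parity of `d` gives `p(X²) = E(X²) + X · O(X²)` with `E = Σ c_{2j} Y^j (Y + 1)^(n-2j)` and
`O = Σ c_{2j+1} Y^j (Y + 1)^(n-2j-1)`, hence `p = E` and `O = 0`. The polynomials `Y^j (Y + 1)^m`
have distinct lowest terms `Y^j`, so `O = 0` forces every `c_{2j+1}` to vanish, and the coefficient
of `Y^(n-k)` in `E` is the stated sum. That sum is symmetric under `k ↦ n - k` because
`C(n-2j, k-j) = C(n-2j, n-k-j)`. -/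

open Polynomial Finset

theorem Finset.sum_range_eq_sum_even_add_sum_odd {M : Type*} [AddCommMonoid M] (f : ℕ → M) :
    ∀ m, ∑ d ∈ range m, f d =
      ∑ j ∈ range ((m + 1) / 2), f (2 * j) + ∑ j ∈ range (m / 2), f (2 * j + 1)
  | 0 => by simp
  | 1 => by simp
  | m + 2 => by
    rw [sum_range_succ, sum_range_succ, Finset.sum_range_eq_sum_even_add_sum_odd f m,
      show (m + 2 + 1) / 2 = (m + 1) / 2 + 1 by omega, show (m + 2) / 2 = m / 2 + 1 by omega,
      sum_range_succ, sum_range_succ]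
    rcases Nat.even_or_odd' m with ⟨k, rfl | rfl⟩
    · rw [show (2 * k + 1) / 2 = k by omega, show 2 * k / 2 = k by omega]
      abel
    · rw [show (2 * k + 1 + 1) / 2 = k + 1 by omega, show (2 * k + 1) / 2 = k by omega]
      abel

theorem Finset.sum_range_min_choose_mul_reflect {R : Type*} [Semiring R] (b : ℕ → R) {n k : ℕ}
    (hk : k ≤ n) :
    ∑ j ∈ range (min (n - k) (n - (n - k)) + 1), ((n - 2 * j).choose (n - k - j) : R) * b j =
      ∑ j ∈ range (min k (n - k) + 1), ((n - 2 * j).choose (k - j) : R) * b j := by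
  rw [Nat.sub_sub_self hk, min_comm]
  refine sum_congr rfl fun j hj => ?_
  rw [mem_range] at hj
  rw [Nat.choose_symm_of_eq_add (by omega : n - 2 * j = (n - k - j) + (k - j))]

namespace Polynomial

variable {R : Type*} [CommSemiring R]

theorem coeff_expand_two_add_X_mul_expand_two_two_mul (a b : R[X]) (i : ℕ) :
    (expand R 2 a + X * expand R 2 b).coeff (2 * i) = a.coeff i := by
  rcases i with _ | i
  · simp [coeff_expand]
  · rw [coeff_add, coeff_expand_mul' two_pos, show 2 * (i + 1) = (2 * i + 1) + 1 by ring,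
      coeff_X_mul, coeff_expand two_pos, if_neg (by omega), add_zero]

theorem coeff_expand_two_add_X_mul_expand_two_two_mul_add_one (a b : R[X]) (i : ℕ) :
    (expand R 2 a + X * expand R 2 b).coeff (2 * i + 1) = b.coeff i := by
  rw [coeff_add, coeff_X_mul, coeff_expand_mul' two_pos, coeff_expand two_pos, if_neg (by omega),
    zero_add]

theorem expand_two_add_X_mul_expand_two_inj {a b a' b' : R[X]}
    (h : expand R 2 a + X * expand R 2 b = expand R 2 a' + X * expand R 2 b') :
    a = a' ∧ b = b' := by
  constructor <;> ext i
  · simpa only [coeff_expand_two_add_X_mul_expand_two_two_mul] using congrArg (coeff · (2 * i)) h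
  · simpa only [coeff_expand_two_add_X_mul_expand_two_two_mul_add_one]
      using congrArg (coeff · (2 * i + 1)) h

theorem eq_zero_of_sum_C_mul_X_pow_mul_X_add_one_pow_eq_zero (a : ℕ → R) (f : ℕ → ℕ) {N : ℕ}
    (h : ∑ j ∈ range N, C (a j) * X ^ j * (X + 1) ^ f j = 0) : ∀ j < N, a j = 0 := by
  induction N generalizing a f with
  | zero => simp
  | succ N ih =>
    have hsplit : ∑ j ∈ range (N + 1), C (a j) * X ^ j * (X + 1) ^ f j =
        C (a 0) * (X + 1) ^ f 0 + X * ∑ j ∈ range N, C (a (j + 1)) * X ^ j * (X + 1) ^ f (j + 1) := by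
      rw [sum_range_succ', mul_sum, add_comm]
      simp only [pow_succ', pow_zero, mul_one]
      congr 1
      refine sum_congr rfl fun j _ => by ring
    rw [hsplit] at h
    have h0 : a 0 = 0 := by simpa using congrArg (eval 0) h
    have hrest : ∑ j ∈ range N, C (a (j + 1)) * X ^ j * (X + 1) ^ f (j + 1) = 0 :=
      isRegular_X.left (by simpa [h0] using h)
    rintro (_ | j) hj
    exacts [h0, ih _ _ hrest j (by omega)]

-- `Xⁿ · q(X + X⁻¹)`, with the negative powers of `X` cleared.
noncomputable def reprPoly (n : ℕ) (q : R[X]) : R[X] :=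
  ∑ j ∈ range (n + 1), C (q.coeff j) * X ^ (n - j) * (X ^ 2 + 1) ^ j

noncomputable def reprEven (n : ℕ) (q : R[X]) : R[X] :=
  ∑ j ∈ range (n / 2 + 1), C (q.coeff (n - 2 * j)) * X ^ j * (X + 1) ^ (n - 2 * j)

noncomputable def reprOdd (n : ℕ) (q : R[X]) : R[X] :=
  ∑ j ∈ range ((n + 1) / 2), C (q.coeff (n - (2 * j + 1))) * X ^ j * (X + 1) ^ (n - (2 * j + 1))

theorem reprPoly_eq_expand_two_add_X_mul_expand_two (n : ℕ) (q : R[X]) :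
    reprPoly n q = expand R 2 (reprEven n q) + X * expand R 2 (reprOdd n q) := by
  have hreflect : reprPoly n q =
      ∑ d ∈ range (n + 1), C (q.coeff (n - d)) * X ^ d * (X ^ 2 + 1) ^ (n - d) := by
    rw [reprPoly, ← sum_range_reflect]
    refine sum_congr rfl fun d hd => ?_
    rw [mem_range] at hd
    rw [show n + 1 - 1 - d = n - d by omega, show n - (n - d) = d by omega]
  rw [hreflect, sum_range_eq_sum_even_add_sum_odd, show (n + 1 + 1) / 2 = n / 2 + 1 by omega,
    reprEven, reprOdd, map_sum, map_sum, mul_sum]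
  congr 1 <;> refine sum_congr rfl fun j _ => ?_ <;>
    simp only [map_mul, map_pow, map_add, expand_C, expand_X, map_one] <;> ring

theorem coeff_reprEven_sub (q : R[X]) {n k : ℕ} (hk : k ≤ n) :
    (reprEven n q).coeff (n - k) =
      ∑ j ∈ range (min k (n - k) + 1), ((n - 2 * j).choose (k - j) : R) * q.coeff (n - 2 * j) := by
  have hterm : ∀ j, (C (q.coeff (n - 2 * j)) * X ^ j * (X + 1) ^ (n - 2 * j)).coeff (n - k) =
      q.coeff (n - 2 * j) * if j ≤ n - k then ((n - 2 * j).choose (n - k - j) : R) else 0 := by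
    intro j
    rw [mul_assoc, coeff_C_mul, coeff_X_pow_mul', coeff_X_add_one_pow]
  rw [reprEven, finsetSum_coeff,
    ← sum_subset (range_subset_range.2 (by omega : min k (n - k) + 1 ≤ n / 2 + 1))]
  · refine sum_congr rfl fun j hj => ?_
    rw [mem_range] at hj
    rw [hterm, if_pos (by omega), mul_comm,
      Nat.choose_symm_of_eq_add (by omega : n - 2 * j = (n - k - j) + (k - j))]
  · intro j hjn hj
    rw [mem_range] at hjn hj
    rw [hterm]
    split_ifs
    · rw [Nat.choose_eq_zero_of_lt (by omega : n - 2 * j < n - k - j), Nat.cast_zero, mul_zero]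
    · rw [mul_zero]

end Polynomial

theorem coeffs_of_represented_polynomial_general (F : Type*) [Field F] (n : ℕ)
    (p q : Polynomial F)
    (hrep : p.comp (X ^ 2) =
      ∑ j ∈ Finset.range (n + 1),
        Polynomial.C (q.coeff j) * X ^ (n - j) * (X ^ 2 + 1) ^ j) :
    (∀ j ≤ n, Odd j → q.coeff (n - j) = 0) ∧
    (∀ k ≤ n,
      p.coeff (n - k) = p.coeff k ∧
      p.coeff (n - k) =
        ∑ j ∈ Finset.range (min k (n - k) + 1),
          ((n - 2 * j).choose (k - j) : F) * q.coeff (n - 2 * j)) := by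
  have hsplit : expand F 2 p + X * expand F 2 0 =
      expand F 2 (reprEven n q) + X * expand F 2 (reprOdd n q) := by
    rw [map_zero, mul_zero, add_zero, expand_eq_comp_X_pow, hrep]
    exact reprPoly_eq_expand_two_add_X_mul_expand_two n q
  obtain ⟨hp, hodd⟩ := expand_two_add_X_mul_expand_two_inj hsplit
  have hcoeff (k : ℕ) (hk : k ≤ n) := hp ▸ coeff_reprEven_sub q hk
  refine ⟨?_, fun k hk => ⟨?_, hcoeff k hk⟩⟩
  · rintro j hj ⟨i, rfl⟩
    exact eq_zero_of_sum_C_mul_X_pow_mul_X_add_one_pow_eq_zero _ _ hodd.symm i (by omega)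
  · rw [hcoeff k hk, ← sum_range_min_choose_mul_reflect _ hk, ← hcoeff (n - k) (Nat.sub_le n k),
      Nat.sub_sub_self hk]

/-- Proposition 2.9 of the paper: if `p` of degree ≤ n is represented by `q` of degree
≤ n, writing `aₖ = p.coeff (n-k)` and `cⱼ = q.coeff (n-j)`, then `cⱼ = 0` for odd `j`
and `aₖ = a_{n-k} = ∑_{j=0}^{min(k,n-k)} C(n-2j, k-j) c_{2j}` for all `0 ≤ k ≤ n`. -/
theorem coeffs_of_represented_polynomial (F : Type*) [Field F] (n : ℕ) (hn : 1 ≤ n)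
    (p q : Polynomial F) (hp : p.degree ≤ n) (hq : q.degree ≤ n)
    (hrep : p.comp (X ^ 2) =
      ∑ j ∈ Finset.range (n + 1),
        Polynomial.C (q.coeff j) * X ^ (n - j) * (X ^ 2 + 1) ^ j) :
    (∀ j ≤ n, Odd j → q.coeff (n - j) = 0) ∧
    (∀ k ≤ n,
      p.coeff (n - k) = p.coeff k ∧
      p.coeff (n - k) =
        ∑ j ∈ Finset.range (min k (n - k) + 1),
          ((n - 2 * j).choose (k - j) : F) * q.coeff (n - 2 * j)) :=
  coeffs_of_represented_polynomial_general F n p q hrep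
end

section
/- Let n ≥ 1 and let C be an n×n matrix over ℤ which is invertible over ℤ (i.e., det C = ±1, equivalently C has an inverse with integer entries). Then det(X•C⁻¹ + (C⁻¹)ᵀ) = det(X•Cᵀ + C) = det(X•C + Cᵀ), i.e., φ_{C⁻¹} = φ_{Cᵀ} = φ_C as polynomials in ℤ[X]. -/
open Polynomial Matrix

/-!
Since `det Cᵀ = det C`, transposing `X • Cᵀ + C` gives `φ_{Cᵀ} = φ_C`. For the inverse, the
congruence `Cᵀ (X • C⁻¹ + C⁻ᵀ) C = X • Cᵀ + C` gives `φ_{C⁻¹} · (det C)² = φ_{Cᵀ}`, and over `ℤ`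
the unit `det C = ±1` squares to `1`.
-/

namespace Matrix

variable {n R S : Type*} [Fintype n] [DecidableEq n] [CommRing R] [CommRing S]

theorem map_nonsing_inv (f : R →+* S) {A : Matrix n n R} (hA : IsUnit A.det) :
    A⁻¹.map f = (A.map f)⁻¹ := by
  refine (inv_eq_right_inv ?_).symm
  rw [← Matrix.map_mul, mul_nonsing_inv A hA, Matrix.map_one f f.map_zero f.map_one]

theorem det_smul_transpose_add (x : R) (A : Matrix n n R) :
    det (x • Aᵀ + A) = det (x • A + Aᵀ) := by
  rw [← det_transpose, transpose_add, transpose_smul, transpose_transpose]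

theorem transpose_mul_smul_nonsing_inv_add_mul {A : Matrix n n R} (hA : IsUnit A.det) (x : R) :
    Aᵀ * (x • A⁻¹ + A⁻¹ᵀ) * A = x • Aᵀ + A := by
  have hAT : Aᵀ * A⁻¹ᵀ = 1 := by rw [← transpose_mul, nonsing_inv_mul A hA, transpose_one]
  rw [mul_add, add_mul, Matrix.mul_smul, Matrix.smul_mul, Matrix.mul_assoc, nonsing_inv_mul A hA,
    hAT, Matrix.mul_one, Matrix.one_mul]

theorem det_smul_nonsing_inv_add_mul_det_sq {A : Matrix n n R} (hA : IsUnit A.det) (x : R) :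
    det (x • A⁻¹ + A⁻¹ᵀ) * A.det ^ 2 = det (x • Aᵀ + A) := by
  rw [← transpose_mul_smul_nonsing_inv_add_mul hA, det_mul, det_mul, det_transpose]
  ring

noncomputable def coxeterPolynomial (A : Matrix n n R) : R[X] :=
  det ((X : R[X]) • A.map Polynomial.C + Aᵀ.map Polynomial.C)

theorem coxeterPolynomial_transpose (A : Matrix n n R) :
    coxeterPolynomial Aᵀ = coxeterPolynomial A := by
  rw [coxeterPolynomial, coxeterPolynomial, transpose_transpose, transpose_map,
    det_smul_transpose_add]

theorem coxeterPolynomial_nonsing_inv_mul_det_sq {A : Matrix n n R} (hA : IsUnit A.det) :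
    coxeterPolynomial A⁻¹ * Polynomial.C (A.det ^ 2) = coxeterPolynomial Aᵀ := by
  have hAC : IsUnit (A.map Polynomial.C).det := by
    simpa [RingHom.map_det] using hA.map Polynomial.C
  rw [coxeterPolynomial, coxeterPolynomial, transpose_transpose, transpose_map, transpose_map,
    map_nonsing_inv Polynomial.C hA, map_pow, RingHom.map_det, RingHom.mapMatrix_apply,
    det_smul_nonsing_inv_add_mul_det_sq hAC]

end Matrix

theorem coxeter_polynomial_inverse_transpose_general (n : ℕ)
    (C : Matrix (Fin n) (Fin n) ℤ) (hC : IsUnit C.det) :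
    ((X : ℤ[X]) • C⁻¹.map Polynomial.C + (C⁻¹)ᵀ.map Polynomial.C).det =
        ((X : ℤ[X]) • Cᵀ.map Polynomial.C + (Cᵀ)ᵀ.map Polynomial.C).det ∧
      ((X : ℤ[X]) • Cᵀ.map Polynomial.C + (Cᵀ)ᵀ.map Polynomial.C).det =
        ((X : ℤ[X]) • C.map Polynomial.C + Cᵀ.map Polynomial.C).det := by
  have hinv := coxeterPolynomial_nonsing_inv_mul_det_sq hC
  rw [Int.isUnit_sq hC, map_one, mul_one] at hinv
  exact ⟨hinv, coxeterPolynomial_transpose C⟩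

/-- Lemma 3.5(b) of the paper: if `C` is a square integer matrix invertible over `ℤ`
(its determinant is a unit, i.e. `±1`), then `φ_{C⁻¹} = φ_{Cᵀ} = φ_C`, where
`φ_C(X) = det(X • C + Cᵀ)`. -/
theorem coxeter_polynomial_inverse_transpose (n : ℕ) (hn : 1 ≤ n)
    (C : Matrix (Fin n) (Fin n) ℤ) (hC : IsUnit C.det) :
    ((X : ℤ[X]) • C⁻¹.map Polynomial.C + (C⁻¹)ᵀ.map Polynomial.C).det =
        ((X : ℤ[X]) • Cᵀ.map Polynomial.C + (Cᵀ)ᵀ.map Polynomial.C).det ∧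
      ((X : ℤ[X]) • Cᵀ.map Polynomial.C + (Cᵀ)ᵀ.map Polynomial.C).det =
        ((X : ℤ[X]) • C.map Polynomial.C + Cᵀ.map Polynomial.C).det :=
  coxeter_polynomial_inverse_transpose_general n C hC
end

section
/- Let F be a field, n ≥ 1, and let N₁, N₂ be n×n matrices over F with N₁² = 0 and N₂² = 0. Then in F[X]: det((X²+1)•I − X•N₁ − X•N₂) = det((X²+1)•I − X²•N₁ − N₂). -/
open Polynomial Matrix

/-!
Write `c = X² + 1`. For square-zero `N₁, N₂` the matrix `c - X²N₁ - N₂`, scaled by `c²`, factors as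
`(c + (X - 1)N₂) (c - XN₁ - XN₂) (c + (X - X²)N₁)`: all cross terms collect into multiples of
`N₂N₁` whose coefficients cancel. The outer factors are a scalar plus a nilpotent matrix, so
their determinants are `cⁿ`, and cancelling `c²ⁿ ≠ 0` in `F[X]` gives the identity.
-/

lemma Matrix.charpoly_eq_X_pow_of_isNilpotent {R n : Type*} [CommRing R] [IsReduced R]
    [Fintype n] [DecidableEq n] {M : Matrix n n R} (hM : IsNilpotent M) :
    M.charpoly = X ^ Fintype.card n := by
  have h := Polynomial.isNilpotent_iff.mp (isNilpotent_charpoly_sub_pow_of_isNilpotent hM)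
  exact sub_eq_zero.mp <| Polynomial.ext fun i ↦ by simpa using (h i).eq_zero

lemma Matrix.det_smul_one_add_of_isNilpotent {R n : Type*} [CommRing R] [IsReduced R]
    [Fintype n] [DecidableEq n] {M : Matrix n n R} (hM : IsNilpotent M) (c : R) :
    (c • (1 : Matrix n n R) + M).det = c ^ Fintype.card n := by
  have h := congrArg (eval c) (charpoly_eq_X_pow_of_isNilpotent hM.neg)
  rwa [eval_charpoly, eval_pow, eval_X, scalar_apply, sub_neg_eq_add, ← smul_one_eq_diagonal]
    at h

lemma mul_mul_eq_sq_smul_of_mul_self_eq_zero {R A : Type*} [CommRing R] [Ring A] [Algebra R A]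
    {a b : A} (ha : a * a = 0) (hb : b * b = 0) (c x : R) :
    (c • (1 : A) + (x - 1) • b) * (c • 1 - x • a - x • b) * (c • 1 + (x - x ^ 2) • a) =
      c ^ 2 • (c • 1 - x ^ 2 • a - b) := by
  have hbaa : b * a * a = 0 := by rw [mul_assoc, ha, mul_zero]
  simp only [mul_add, add_mul, mul_sub, sub_mul, smul_mul_assoc, mul_smul_comm, smul_smul,
    mul_one, one_mul, ← mul_assoc, ha, hb, hbaa, smul_zero, zero_mul, smul_add, smul_sub]
  module

theorem det_square_nilpotent_identity_general (F : Type*) [Field F] (n : ℕ)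
    (N₁ N₂ : Matrix (Fin n) (Fin n) F) (h1 : N₁ * N₁ = 0) (h2 : N₂ * N₂ = 0) :
    (((X : F[X]) ^ 2 + 1) • (1 : Matrix (Fin n) (Fin n) F[X]) -
        (X : F[X]) • N₁.map Polynomial.C - (X : F[X]) • N₂.map Polynomial.C).det =
      (((X : F[X]) ^ 2 + 1) • (1 : Matrix (Fin n) (Fin n) F[X]) -
        ((X : F[X]) ^ 2) • N₁.map Polynomial.C - N₂.map Polynomial.C).det := by
  set c : F[X] := X ^ 2 + 1
  have hc : c ≠ 0 := fun h ↦ by simpa [c] using congrArg (eval 0) h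
  have hsq {N : Matrix (Fin n) (Fin n) F} (h : N * N = 0) : N.map C * N.map C = 0 := by
    rw [← Matrix.map_mul, h, Matrix.map_zero _ (map_zero C)]
  have hnil {N : Matrix (Fin n) (Fin n) F} (h : N * N = 0) (d : F[X]) :
      IsNilpotent (d • N.map C) :=
    (IsNilpotent.mk _ 2 (by rw [sq, hsq h])).smul d
  have key := congrArg det (mul_mul_eq_sq_smul_of_mul_self_eq_zero (hsq h1) (hsq h2) c X)
  rw [det_mul, det_mul, det_smul, det_smul_one_add_of_isNilpotent (hnil h2 _),
    det_smul_one_add_of_isNilpotent (hnil h1 _)] at key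
  clear_value c
  exact mul_left_cancel₀ (pow_ne_zero _ (pow_ne_zero 2 hc)) (by linear_combination key)

/-- Proposition 3.7 of the paper: if `N₁² = N₂² = 0`, then
`det((X²+1)I - X N₁ - X N₂) = det((X²+1)I - X² N₁ - N₂)` in `F[X]`. -/
theorem det_square_nilpotent_identity (F : Type*) [Field F] (n : ℕ) (hn : 1 ≤ n)
    (N₁ N₂ : Matrix (Fin n) (Fin n) F) (h1 : N₁ * N₁ = 0) (h2 : N₂ * N₂ = 0) :
    (((X : F[X]) ^ 2 + 1) • (1 : Matrix (Fin n) (Fin n) F[X]) -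
        (X : F[X]) • N₁.map Polynomial.C - (X : F[X]) • N₂.map Polynomial.C).det =
      (((X : F[X]) ^ 2 + 1) • (1 : Matrix (Fin n) (Fin n) F[X]) -
        ((X : F[X]) ^ 2) • N₁.map Polynomial.C - N₂.map Polynomial.C).det :=
  det_square_nilpotent_identity_general F n N₁ N₂ h1 h2
end

section
/- Let F be a field, n ≥ 1, and let N be an n×n matrix over F with N² = 0. Set C = I − N and A = N + Nᵀ, let φ_C(X) = det(X•C + Cᵀ) and let p_A = charpoly(A) = det(X•I − A). Then φ_C(X²) = Σ_{k=0}^{n} p_A.coeff(k)·X^{n−k}·(X²+1)^{k}; that is, φ_C(X²) = Xⁿ·p_A(X + X^{-1}), so φ_C is represented by p_A. -/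
open Polynomial Matrix

set_option maxHeartbeats 1000000
set_option synthInstance.maxHeartbeats 400000


lemma my_eval_charpoly {K : Type*} [CommRing K] {m : ℕ} (M : Matrix (Fin m) (Fin m) K) (r : K) :
    M.charpoly.eval r = (r • (1 : Matrix (Fin m) (Fin m) K) - M).det := by
  rw [Matrix.charpoly, ← coe_evalRingHom, RingHom.map_det]
  congr 1
  ext i j
  by_cases h : i = j <;>
    simp [Matrix.charmatrix_apply, Matrix.one_apply, h]

lemma my_det_one_add {K : Type*} [Field K] {m : ℕ} (M : Matrix (Fin m) (Fin m) K)
    (h : M * M = 0) : (1 + M).det = 1 := by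
  have hnil : IsNilpotent M := ⟨2, by rw [pow_two]; exact h⟩
  have h1 := Matrix.isNilpotent_charpoly_sub_pow_of_isNilpotent hnil
  rw [Fintype.card_fin] at h1
  have hcp : M.charpoly = X ^ m := by
    have := h1.eq_zero
    linear_combination (norm := ring_nf) this
  have h2 : ((-1 : K) • (1 : Matrix (Fin m) (Fin m) K) - M).det = (-1) ^ m := by
    rw [← my_eval_charpoly, hcp]; simp
  have h3 : (-1 : K) • (1 : Matrix (Fin m) (Fin m) K) - M = (-1 : K) • (1 + M) := by
    simp [smul_add]; abel
  rw [h3, Matrix.det_smul, Fintype.card_fin] at h2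
  have : ((-1 : K) ^ m)⁻¹ * ((-1) ^ m * (1 + M).det) = ((-1 : K) ^ m)⁻¹ * (-1) ^ m := by rw [h2]
  rwa [← mul_assoc, inv_mul_cancel₀ (by simp [pow_ne_zero]), one_mul] at this

lemma my_det_smul_one_add {K : Type*} [Field K] {m : ℕ} (N : Matrix (Fin m) (Fin m) K)
    (hN2 : N * N = 0) (a b : K) (ha : a ≠ 0) :
    (a • (1 : Matrix (Fin m) (Fin m) K) + b • N).det = a ^ m := by
  have : a • (1 : Matrix (Fin m) (Fin m) K) + b • N = a • (1 + (b / a) • N) := by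
    rw [smul_add, smul_smul, mul_div_cancel₀ _ ha]
  rw [this, Matrix.det_smul, Fintype.card_fin, my_det_one_add, mul_one]
  rw [smul_mul_assoc, mul_smul_comm, smul_smul, hN2, smul_zero]

lemma my_key {K : Type*} [Field K] {m : ℕ} (N : Matrix (Fin m) (Fin m) K)
    (hN2 : N * N = 0) (t : K) (ht1 : t ^ 2 + 1 ≠ 0) :
    (t ^ 2 • (1 - N) + (1 - N)ᵀ).det = ((t ^ 2 + 1) • 1 - t • (N + Nᵀ)).det := by
  have hNT2 : Nᵀ * Nᵀ = 0 := by
    rw [← Matrix.transpose_mul, hN2, Matrix.transpose_zero]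
  have hkey : ((t ^ 2 + 1) • 1 + (t * (1 - t)) • N) * ((t ^ 2 + 1) • 1 - t • (N + Nᵀ)) =
      (t ^ 2 • (1 - N) + (1 - N)ᵀ) * ((t ^ 2 + 1) • 1 + (1 - t) • Nᵀ) := by
    rw [Matrix.transpose_sub, Matrix.transpose_one]
    simp only [Matrix.add_mul, Matrix.mul_add, Matrix.sub_mul, Matrix.mul_sub,
      smul_mul_assoc, mul_smul_comm, smul_smul, Matrix.mul_one, Matrix.one_mul,
      hN2, hNT2, smul_zero, smul_sub, smul_add]
    module
  have hdet := congrArg Matrix.det hkey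
  rw [Matrix.det_mul, Matrix.det_mul, my_det_smul_one_add N hN2 _ _ ht1,
    my_det_smul_one_add Nᵀ hNT2 _ _ ht1] at hdet
  exact (mul_left_cancel₀ (pow_ne_zero m ht1) (hdet.trans (mul_comm _ _))).symm

lemma my_core {K : Type*} [Field K] {m : ℕ} (N : Matrix (Fin m) (Fin m) K)
    (hN2 : N * N = 0) (t : K) (ht : t ≠ 0) (ht1 : t ^ 2 + 1 ≠ 0) :
    (t ^ 2 • (1 - N) + (1 - N)ᵀ).det =
      ∑ k ∈ Finset.range (m + 1),
        (N + Nᵀ).charpoly.coeff k * t ^ (m - k) * (t ^ 2 + 1) ^ k := by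
  rw [my_key N hN2 t ht1]
  have h1 : (t ^ 2 + 1) • (1 : Matrix (Fin m) (Fin m) K) - t • (N + Nᵀ) =
      t • ((t + t⁻¹) • 1 - (N + Nᵀ)) := by
    rw [smul_sub, smul_smul, mul_add, mul_inv_cancel₀ ht, ← sq]
  rw [h1, Matrix.det_smul, Fintype.card_fin, ← my_eval_charpoly]
  have hdeg : (N + Nᵀ).charpoly.natDegree < m + 1 := by
    rw [Matrix.charpoly_natDegree_eq_dim, Fintype.card_fin]; omega
  rw [Polynomial.eval_eq_sum_range' hdeg, Finset.mul_sum]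
  refine Finset.sum_congr rfl fun k hk => ?_
  have hk' : k ≤ m := by simpa using Nat.lt_succ_iff.mp (Finset.mem_range.mp hk)
  have : t ^ m = t ^ (m - k) * t ^ k := by rw [← pow_add, Nat.sub_add_cancel hk']
  rw [this]
  have h2 : t ^ k * (t + t⁻¹) ^ k = (t ^ 2 + 1) ^ k := by
    rw [← mul_pow]; congr 1; field_simp
  calc t ^ (m - k) * t ^ k * ((N + Nᵀ).charpoly.coeff k * (t + t⁻¹) ^ k)
      = (N + Nᵀ).charpoly.coeff k * t ^ (m - k) * (t ^ k * (t + t⁻¹) ^ k) := by ring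
    _ = _ := by rw [h2]

/-- Theorem 3.8 of the paper: if `N² = 0`, `C = I - N` and `A = N + Nᵀ`, then the
Coxeter polynomial `φ_C(X) = det(X • C + Cᵀ)` satisfies
`φ_C(X²) = Xⁿ p_A(X + X⁻¹)`, where `p_A` is the characteristic polynomial of `A`;
that is, `φ_C` is represented by `p_A`. -/
theorem coxeter_polynomial_represented_by_charpoly (F : Type*) [Field F] (n : ℕ)
    (hn : 1 ≤ n) (N : Matrix (Fin n) (Fin n) F) (hN2 : N * N = 0) :
    let C : Matrix (Fin n) (Fin n) F := 1 - N
    let A : Matrix (Fin n) (Fin n) F := N + Nᵀ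
    let φ : F[X] := ((X : F[X]) • C.map Polynomial.C + Cᵀ.map Polynomial.C).det
    φ.comp (X ^ 2) =
      ∑ k ∈ Finset.range (n + 1),
        Polynomial.C (A.charpoly.coeff k) * X ^ (n - k) * (X ^ 2 + 1) ^ k := by
  intro C A φ
  have hφ2 : φ.comp (X ^ 2) = (((X : F[X]) ^ 2) • C.map Polynomial.C + Cᵀ.map Polynomial.C).det := by
    have h0 : φ.comp (X ^ 2) = (eval₂RingHom Polynomial.C ((X : F[X]) ^ 2)) φ := by
      simp [Polynomial.comp, coe_eval₂RingHom]
    rw [h0, RingHom.map_det]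
    congr 1
    ext i j
    simp [Matrix.map_apply, Matrix.add_apply, Matrix.smul_apply, smul_eq_mul]
  apply RatFunc.algebraMap_injective F
  set ι : F[X] →+* RatFunc F := (algebraMap F[X] (RatFunc F) : F[X] →+* RatFunc F) with hι
  set ι₀ : F →+* RatFunc F := ι.comp Polynomial.C with hι₀
  rw [hφ2, RingHom.map_det, RingHom.mapMatrix_apply]
  have hmat : (((X : F[X]) ^ 2) • C.map Polynomial.C + Cᵀ.map Polynomial.C).map ι =
      (RatFunc.X : RatFunc F) ^ 2 • (1 - N.map ι₀) + (1 - N.map ι₀)ᵀ := by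
    ext i j
    simp only [C, Matrix.map_apply, Matrix.add_apply, Matrix.smul_apply, Matrix.sub_apply,
      Matrix.one_apply, Matrix.transpose_apply, smul_eq_mul, map_add, _root_.map_mul, map_pow,
      map_sub, _root_.map_one, hι, RatFunc.algebraMap_X, RatFunc.algebraMap_C]
    by_cases h : i = j
    · simp only [h, if_pos rfl, if_true, hι₀, RingHom.comp_apply, hι, RatFunc.algebraMap_C,
        _root_.map_one, _root_.map_zero, mul_one]
    · simp only [if_neg h, if_neg (Ne.symm h), hι₀, RingHom.comp_apply, hι,
        RatFunc.algebraMap_C, _root_.map_one, _root_.map_zero, mul_zero]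
  rw [hmat]
  have hNK2 : N.map ι₀ * N.map ι₀ = 0 := by
    rw [← Matrix.map_mul, hN2, Matrix.map_zero _ (map_zero ι₀)]
  have hX1 : (RatFunc.X : RatFunc F) ^ 2 + 1 ≠ 0 := by
    have h1 : (RatFunc.X : RatFunc F) ^ 2 + 1 = ι ((X : F[X]) ^ 2 + 1) := by
      simp [hι, map_pow, RatFunc.algebraMap_X]
    rw [h1]
    intro h
    have h2 := RatFunc.algebraMap_injective F (h.trans (map_zero ι).symm)
    have h0 := congrArg (fun p => Polynomial.coeff p 0) h2
    simp at h0
  rw [my_core (N.map ι₀) hNK2 RatFunc.X RatFunc.X_ne_zero hX1]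
  have hA : N.map ι₀ + (N.map ι₀)ᵀ = A.map ι₀ := by
    rw [← Matrix.transpose_map]
    ext i j
    simp [A, Matrix.map_apply, Matrix.add_apply]
  rw [hA, Matrix.charpoly_map, map_sum]
  refine Finset.sum_congr rfl fun k _ => ?_
  simp [map_pow, hι, RatFunc.algebraMap_X, hι₀, Polynomial.coeff_map]
end

section
/- Let n ≥ 1, let G be a simple graph on vertex set Fin n with adjacency matrix A (over ℤ), and let N be an n×n matrix over ℤ with N + Nᵀ = A and N² = 0 (a bipartite orientation of G). Set C = I − N, φ(X) = det(X•C + Cᵀ), and p_G = charpoly(A). Then φ(X²) = Σ_{k=0}^{n} p_G.coeff(k)·X^{n−k}·(X²+1)^{k}, i.e., the Coxeter polynomial of the bipartite quiver satisfies A'Campo's relation φ(X²) = Xⁿ·p_G(X + X^{-1}). -/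
open Polynomial Matrix

-- Facts about bipartite orientations over ℤ
lemma acampo_aux_zero_one {n : ℕ} (G : SimpleGraph (Fin n))
    [DecidableRel G.Adj] (N : Matrix (Fin n) (Fin n) ℤ)
    (hNA : N + Nᵀ = G.adjMatrix ℤ) (hN2 : N * N = 0) :
    ∀ i j, N i j = 0 ∨ N i j = 1 := by
  have hA : ∀ i j, N i j + N j i = (G.adjMatrix ℤ) i j := by
    intro i j
    have := congrFun (congrFun hNA i) j
    simpa [Matrix.add_apply, Matrix.transpose_apply] using this
  have hle : ∀ p : Fin n × Fin n, N p.1 p.2 * N p.2 p.1 ≤ 0 := by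
    rintro ⟨i, j⟩
    by_cases h : G.Adj i j
    · have h1 : N i j + N j i = 1 := by rw [hA i j]; simp [h]
      have : N j i = 1 - N i j := by linarith
      rw [this]; nlinarith [sq_nonneg (2 * N i j - 1)]
    · have h1 : N i j + N j i = 0 := by rw [hA i j]; simp [h]
      have : N j i = - N i j := by linarith
      rw [this]; nlinarith [sq_nonneg (N i j)]
  have htr : ∑ p ∈ Finset.univ ×ˢ Finset.univ, N p.1 p.2 * N p.2 p.1 = 0 := by
    rw [Finset.sum_product]
    have := congrArg Matrix.trace hN2
    simpa [Matrix.trace, Matrix.mul_apply, Matrix.diag] using this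
  have hzero : ∀ p ∈ (Finset.univ ×ˢ Finset.univ : Finset (Fin n × Fin n)),
      N p.1 p.2 * N p.2 p.1 = 0 :=
    (Finset.sum_eq_zero_iff_of_nonpos (fun p _ => hle p)).mp htr
  intro i j
  have hz := hzero (i, j) (by simp)
  simp only at hz
  by_cases h : G.Adj i j
  · have h1 : N i j + N j i = 1 := by
      rw [hA i j]; simp [h]
    have : N i j * (1 - N i j) = 0 := by
      have : N j i = 1 - N i j := by linarith
      rwa [this] at hz
    rcases mul_eq_zero.mp this with h' | h'
    · exact Or.inl h'
    · right; linarith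
  · have h1 : N i j + N j i = 0 := by
      rw [hA i j]; simp [h]
    left
    have : N i j * (- N i j) = 0 := by
      have : N j i = - N i j := by linarith
      rwa [this] at hz
    nlinarith

lemma acampo_aux_kill {n : ℕ} (G : SimpleGraph (Fin n))
    [DecidableRel G.Adj] (N : Matrix (Fin n) (Fin n) ℤ)
    (hNA : N + Nᵀ = G.adjMatrix ℤ) (hN2 : N * N = 0) :
    ∀ i j k, N i j * N j k = 0 := by
  have h01 := acampo_aux_zero_one G N hNA hN2
  intro i j k
  have hsum : ∑ m, N i m * N m k = 0 := by
    have := congrFun (congrFun hN2 i) k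
    simpa [Matrix.mul_apply] using this
  have hnn : ∀ m ∈ (Finset.univ : Finset (Fin n)), 0 ≤ N i m * N m k := by
    intro m _
    rcases h01 i m with h | h <;> rcases h01 m k with h' | h' <;> simp [h, h']
  exact (Finset.sum_eq_zero_iff_of_nonneg hnn).mp hsum j (by simp)

-- eval of charpoly
lemma acampo_eval_charpoly {n : ℕ} (A : Matrix (Fin n) (Fin n) ℚ) (t : ℚ) :
    A.charpoly.eval t = (t • (1 : Matrix (Fin n) (Fin n) ℚ) - A).det := by
  rw [Matrix.charpoly]
  rw [show (A.charmatrix).det.eval t = (Polynomial.evalRingHom t) (A.charmatrix).det from rfl]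
  rw [RingHom.map_det]
  congr 1
  ext i j
  by_cases h : i = j
  · subst h; simp [Matrix.charmatrix_apply_eq, Matrix.one_apply]
  · simp [Matrix.charmatrix_apply_ne _ _ _ h, Matrix.one_apply_ne h, Matrix.map_apply,
      Matrix.sub_apply, Matrix.smul_apply, h]

-- determinant evaluation of det((x²+1)I − xA)
lemma acampo_det_eval {n : ℕ} (A : Matrix (Fin n) (Fin n) ℚ) (x : ℚ) (hx : x ≠ 0) :
    ((x ^ 2 + 1) • (1 : Matrix (Fin n) (Fin n) ℚ) - x • A).det =
      ∑ k ∈ Finset.range (n + 1), A.charpoly.coeff k * x ^ (n - k) * (x ^ 2 + 1) ^ k := by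
  have key : (x ^ 2 + 1) • (1 : Matrix (Fin n) (Fin n) ℚ) - x • A
      = x • ((x + x⁻¹) • (1 : Matrix (Fin n) (Fin n) ℚ) - A) := by
    rw [smul_sub, smul_smul]
    congr 2
    field_simp
  rw [key, Matrix.det_smul, ← acampo_eval_charpoly]
  have hdeg : A.charpoly.natDegree < n + 1 := by
    rw [Matrix.charpoly_natDegree_eq_dim]
    simp
  rw [Polynomial.eval_eq_sum_range' hdeg, Finset.mul_sum, Fintype.card_fin]
  apply Finset.sum_congr rfl
  intro k hk
  have hk' : k ≤ n := Nat.lt_succ_iff.mp (Finset.mem_range.mp hk)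
  have hxn : (x : ℚ) ^ n = x ^ (n - k) * x ^ k := by
    rw [← pow_add, Nat.sub_add_cancel hk']
  rw [hxn]
  have : x ^ k * (x + x⁻¹) ^ k = (x ^ 2 + 1) ^ k := by
    rw [← mul_pow]
    congr 1
    field_simp
  calc x ^ (n - k) * x ^ k * (A.charpoly.coeff k * (x + x⁻¹) ^ k)
      = A.charpoly.coeff k * x ^ (n - k) * (x ^ k * (x + x⁻¹) ^ k) := by ring
    _ = A.charpoly.coeff k * x ^ (n - k) * (x ^ 2 + 1) ^ k := by rw [this]

-- conjugation lemma
lemma acampo_conj {n : ℕ} (x : ℚ) (hx : x ≠ 0) (A M : Matrix (Fin n) (Fin n) ℚ)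
    (hsym : ∀ i j, M i j + M j i = A i j)
    (h01 : ∀ i j, M i j = 0 ∨ M i j = 1)
    (hkill : ∀ i j k, M i j = 1 → M j k ≠ 1)
    (hdiag : ∀ i, A i i = 0) :
    ((x ^ 2 + 1) • (1 : Matrix (Fin n) (Fin n) ℚ) - x ^ 2 • M - Mᵀ).det =
      ((x ^ 2 + 1) • (1 : Matrix (Fin n) (Fin n) ℚ) - x • A).det := by
  classical
  set d : Fin n → ℚ := fun i => if ∃ k, M i k = 1 then x else 1 with hd
  have hdne : ∀ i, d i ≠ 0 := by
    intro i; rw [hd]; dsimp only; split <;> simp [hx]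
  have hcomm : ((x ^ 2 + 1) • (1 : Matrix (Fin n) (Fin n) ℚ) - x ^ 2 • M - Mᵀ)
      * Matrix.diagonal d = Matrix.diagonal d *
      ((x ^ 2 + 1) • (1 : Matrix (Fin n) (Fin n) ℚ) - x • A) := by
    ext i j
    rw [Matrix.mul_diagonal, Matrix.diagonal_mul]
    simp only [Matrix.sub_apply, Matrix.smul_apply, Matrix.transpose_apply, smul_eq_mul]
    by_cases h : i = j
    · subst h
      have hMii : M i i = 0 := by
        have := hsym i i; have := hdiag i
        rcases h01 i i with h' | h' <;> [exact h'; linarith]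
      have hAii := hdiag i
      rw [hMii, hAii]; ring
    · rw [Matrix.one_apply_ne h]
      have hAij : A i j = M i j + M j i := (hsym i j).symm
      rcases h01 i j with hij | hij <;> rcases h01 j i with hji | hji
      · rw [hij, hji, hAij, hij, hji]; ring
      · -- M j i = 1, M i j = 0 : j is a source, i is not
        have hdj : d j = x := by rw [hd]; exact if_pos ⟨i, hji⟩
        have hdi : d i = 1 := by
          rw [hd]; dsimp only; rw [if_neg]
          rintro ⟨k, hk⟩; exact hkill j i k hji hk
        rw [hij, hji, hdi, hdj, hAij, hij, hji]; ring
      · have hdi : d i = x := by rw [hd]; exact if_pos ⟨j, hij⟩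
        have hdj : d j = 1 := by
          rw [hd]; dsimp only; rw [if_neg]
          rintro ⟨k, hk⟩; exact hkill i j k hij hk
        rw [hij, hji, hdi, hdj, hAij, hij, hji]; ring
      · exact absurd hji (hkill i j i hij)
  have hdet := congrArg Matrix.det hcomm
  rw [Matrix.det_mul, Matrix.det_mul, Matrix.det_diagonal] at hdet
  have hprod : ∏ i, d i ≠ 0 := Finset.prod_ne_zero_iff.mpr fun i _ => hdne i
  exact mul_right_cancel₀ hprod (by rw [hdet]; ring)

/-- Proposition 3.11 of the paper (A'Campo's theorem): if `N` is a bipartite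
orientation of a simple graph `G` (i.e. `N + Nᵀ = A_G` and `N² = 0`) and `C = I - N`,
then the Coxeter polynomial `φ(X) = det(X • C + Cᵀ)` satisfies
`φ(X²) = Xⁿ p_G(X + X⁻¹)`, where `p_G` is the characteristic polynomial of the
adjacency matrix of `G`. -/
theorem acampo_relation (n : ℕ) (hn : 1 ≤ n) (G : SimpleGraph (Fin n))
    [DecidableRel G.Adj] (N : Matrix (Fin n) (Fin n) ℤ)
    (hNA : N + Nᵀ = G.adjMatrix ℤ) (hN2 : N * N = 0) :
    let C : Matrix (Fin n) (Fin n) ℤ := 1 - N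
    let φ : ℤ[X] := ((X : ℤ[X]) • C.map Polynomial.C + Cᵀ.map Polynomial.C).det
    let pG : ℤ[X] := (G.adjMatrix ℤ).charpoly
    φ.comp (X ^ 2) =
      ∑ k ∈ Finset.range (n + 1),
        Polynomial.C (pG.coeff k) * X ^ (n - k) * (X ^ 2 + 1) ^ k := by
  intro C φ pG
  show (((X : ℤ[X]) • ((1 : Matrix (Fin n) (Fin n) ℤ) - N).map Polynomial.C +
      ((1 : Matrix (Fin n) (Fin n) ℤ) - N)ᵀ.map Polynomial.C).det).comp (X ^ 2) =
      ∑ k ∈ Finset.range (n + 1),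
        Polynomial.C (((G.adjMatrix ℤ).charpoly).coeff k) * X ^ (n - k) * (X ^ 2 + 1) ^ k
  set M0 : Matrix (Fin n) (Fin n) ℤ[X] :=
    (X : ℤ[X]) • ((1 : Matrix (Fin n) (Fin n) ℤ) - N).map Polynomial.C +
      ((1 : Matrix (Fin n) (Fin n) ℤ) - N)ᵀ.map Polynomial.C with hM0
  set ι : ℤ →+* ℚ := Int.castRingHom ℚ with hι
  have hιc : ⇑ι = Int.cast := rfl
  apply Polynomial.map_injective ι (by rw [hιc]; exact Int.cast_injective)
  apply Polynomial.eq_of_infinite_eval_eq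
  have h0 : ({x : ℚ | x ≠ 0}).Infinite := by
    rw [show {x : ℚ | x ≠ 0} = ({0}ᶜ : Set ℚ) from Set.ext fun y => by simp]
    exact (Set.finite_singleton 0).infinite_compl
  refine h0.mono ?_
  intro x hx
  replace hx : x ≠ 0 := hx
  simp only [Set.mem_setOf_eq]
  set N' : Matrix (Fin n) (Fin n) ℚ := N.map ι with hN'
  set A' : Matrix (Fin n) (Fin n) ℚ := (G.adjMatrix ℤ).map ι with hA'
  -- facts
  have hAij : ∀ i j, N i j + N j i = (G.adjMatrix ℤ) i j := by
    intro i j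
    have := congrFun (congrFun hNA i) j
    simpa [Matrix.add_apply, Matrix.transpose_apply] using this
  have h01 := acampo_aux_zero_one G N hNA hN2
  have hkill := acampo_aux_kill G N hNA hN2
  have hsym' : ∀ i j, N' i j + N' j i = A' i j := by
    intro i j
    simp only [hN', hA', Matrix.map_apply, hιc]
    exact_mod_cast hAij i j
  have h01' : ∀ i j, N' i j = 0 ∨ N' i j = 1 := by
    intro i j
    rcases h01 i j with h | h <;> simp [hN', Matrix.map_apply, hιc, h]
  have hkill' : ∀ i j k, N' i j = 1 → N' j k ≠ 1 := by
    intro i j k h1 h2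
    have e1 : N i j = 1 := by
      have : ((N i j : ℤ) : ℚ) = 1 := h1
      exact_mod_cast this
    have e2 : N j k = 1 := by
      have : ((N j k : ℤ) : ℚ) = 1 := h2
      exact_mod_cast this
    have := hkill i j k
    rw [e1, e2] at this
    norm_num at this
  have hdiag' : ∀ i, A' i i = 0 := by
    intro i
    simp [hA', Matrix.map_apply, hιc]
  -- LHS computation
  have hL : Polynomial.eval x ((M0.det.comp (X ^ 2)).map ι)
      = ∑ k ∈ Finset.range (n + 1),
          (((G.adjMatrix ℤ).charpoly).coeff k : ℚ) * x ^ (n - k) * (x ^ 2 + 1) ^ k := by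
    rw [Polynomial.map_comp, Polynomial.eval_comp, Polynomial.map_pow, Polynomial.map_X,
      Polynomial.eval_pow, Polynomial.eval_X, Polynomial.eval_map]
    have h1 : Polynomial.eval₂ ι (x ^ 2) M0.det
        = (M0.map (Polynomial.eval₂RingHom ι (x ^ 2))).det :=
      RingHom.map_det (Polynomial.eval₂RingHom ι (x ^ 2)) M0
    rw [h1]
    have h2 : M0.map (Polynomial.eval₂RingHom ι (x ^ 2))
        = (x ^ 2 + 1) • (1 : Matrix (Fin n) (Fin n) ℚ) - x ^ 2 • N' - N'ᵀ := by
      have hev : ∀ a : ℤ, Polynomial.eval₂ ι (x ^ 2) ((a : ℤ[X])) = (a : ℚ) := fun a => by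
        rw [← Polynomial.C_eq_intCast, Polynomial.eval₂_C]; simp [hιc]
      ext i j
      by_cases h : i = j <;>
        simp [hM0, hN', hιc, Matrix.map_apply, Matrix.add_apply, Matrix.smul_apply,
          Matrix.sub_apply, Matrix.transpose_apply, Matrix.one_apply, h, smul_eq_mul,
          Polynomial.eval₂_C, hev] <;>
        ring
    rw [h2, acampo_conj x hx A' N' hsym' h01' hkill' hdiag', acampo_det_eval A' x hx]
    apply Finset.sum_congr rfl
    intro k _
    congr 2
    rw [hA', Matrix.charpoly_map, Polynomial.coeff_map]
    rw [hιc]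
  rw [hL, Polynomial.map_sum, Polynomial.eval_finset_sum]
  apply Finset.sum_congr rfl
  intro k _
  simp [hιc]
end
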